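/- arXiv:2409.02812 — 6 statements merged into one kernel-verified Lean document; each statement's English description precedes it below -/
import Mathlib

section
/- For integers t ≥ 2m ≥ 2, let N_m(k) denote the number of trees on vertex set {1,…,k}, rooted at vertex 1, whose height is at least m−1. Then |M(t,m)| = (1/2) · Σ_{k=m}^{t−m} binom(t,k) · k · (t−k) · N_m(k) · N_m(t−k). -/
open SimpleGraph Finset Real Filter
open scoped Classical

noncomputable section

/-- `P` is a system of pairwise vertex-disjoint paths in `G`, each of length at least `ℓ`
(a path of length `ℓ` has `ℓ` edges and `ℓ+1` vertices). -/
def IsPathSystem {V : Type*} (G : SimpleGraph V) (ℓ : ℕ)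
    (P : Finset (Σ u : V, Σ v : V, G.Walk u v)) : Prop :=
  (∀ p ∈ P, p.2.2.IsPath ∧ ℓ ≤ p.2.2.length) ∧
    ∀ p ∈ P, ∀ q ∈ P, p ≠ q → ∀ x ∈ p.2.2.support, x ∉ q.2.2.support

/-- Real-threshold variant of `IsPathSystem`: each path has length at least `r : ℝ`. -/
def IsPathSystemR {V : Type*} (G : SimpleGraph V) (r : ℝ)
    (P : Finset (Σ u : V, Σ v : V, G.Walk u v)) : Prop :=
  (∀ p ∈ P, p.2.2.IsPath ∧ r ≤ (p.2.2.length : ℝ)) ∧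
    ∀ p ∈ P, ∀ q ∈ P, p ≠ q → ∀ x ∈ p.2.2.support, x ∉ q.2.2.support

/-- The number of vertices covered by the path system `P`. -/
def coveredCard {V : Type*} [DecidableEq V] {G : SimpleGraph V}
    (P : Finset (Σ u : V, Σ v : V, G.Walk u v)) : ℕ :=
  (P.biUnion fun p => p.2.2.support.toFinset).card

/-- `cov G ℓ`: the maximum number of vertices that can be covered by a collection of
pairwise vertex-disjoint paths in `G`, each of length at least `ℓ`. -/
def cov {V : Type*} [DecidableEq V] (G : SimpleGraph V) (ℓ : ℕ) : ℕ :=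
  sSup {n | ∃ P, IsPathSystem G ℓ P ∧ n = coveredCard P}

/-- The edge `uv` of `G` is `m`-centred: `G - uv` contains two vertex-disjoint paths of
length at least `m - 1`, one starting at `u` and one starting at `v`. -/
def IsCentred {V : Type*} (G : SimpleGraph V) (m : ℕ) (u v : V) : Prop :=
  G.Adj u v ∧ ∃ (a b : V) (P : (G.deleteEdges {s(u, v)}).Walk u a)
      (Q : (G.deleteEdges {s(u, v)}).Walk v b),
    P.IsPath ∧ Q.IsPath ∧ m - 1 ≤ P.length ∧ m - 1 ≤ Q.length ∧
      ∀ x ∈ P.support, x ∉ Q.support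

/-- The number of `m`-centred edges of `G`. -/
def centredEdgeCount {V : Type*} (G : SimpleGraph V) (m : ℕ) : ℕ :=
  {e : Sym2 V | ∃ u v, e = s(u, v) ∧ IsCentred G m u v}.ncard

/-- `|M(t,m)|`: the number of pairs `(e, T)` where `T` is a tree on `{1,…,t}` and `e` is an
`m`-centred edge of `T`. -/
def Mcard (t m : ℕ) : ℕ :=
  {p : Sym2 (Fin t) × SimpleGraph (Fin t) |
    p.2.IsTree ∧ ∃ u v, p.1 = s(u, v) ∧ IsCentred p.2 m u v}.ncard

/-- Probability weight of a fixed graph `G` under the Erdős–Rényi measure `G(n,p)`. -/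
def erWeight (n : ℕ) (p : ℝ) (G : SimpleGraph (Fin n)) : ℝ :=
  p ^ G.edgeSet.ncard * (1 - p) ^ (n.choose 2 - G.edgeSet.ncard)

/-- Probability of the event `A` under the Erdős–Rényi measure `G(n,p)`. -/
def erProb (n : ℕ) (p : ℝ) (A : Set (SimpleGraph (Fin n))) : ℝ :=
  ∑ G ∈ Finset.univ.filter (· ∈ A), erWeight n p G

/-- Expectation of `X` under the Erdős–Rényi measure `G(n,p)`. -/
def erExpect (n : ℕ) (p : ℝ) (X : SimpleGraph (Fin n) → ℝ) : ℝ :=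
  ∑ G : SimpleGraph (Fin n), erWeight n p G * X G

/-- Probability that a uniformly random labelled tree on `{1,…,t}` lies in `A`. -/
def treeProb (t : ℕ) (A : Set (SimpleGraph (Fin t))) : ℝ :=
  ((Finset.univ.filter fun G : SimpleGraph (Fin t) => G.IsTree ∧ G ∈ A).card : ℝ) /
    (t : ℝ) ^ (t - 2)

/-- Expectation of `f` for a uniformly random labelled tree on `{1,…,t}`. -/
def treeExpect (t : ℕ) (f : SimpleGraph (Fin t) → ℝ) : ℝ :=
  (∑ G ∈ Finset.univ.filter (fun G : SimpleGraph (Fin t) => G.IsTree), f G) /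
    (t : ℝ) ^ (t - 2)

/-- Probability that a uniformly random rooted labelled tree on `{1,…,t}`
(a pair of a tree and a root) lies in `A`. -/
def rootedTreeProb (t : ℕ) (A : Set (SimpleGraph (Fin t) × Fin t)) : ℝ :=
  ((Finset.univ.filter fun p : SimpleGraph (Fin t) × Fin t => p.1.IsTree ∧ p ∈ A).card : ℝ) /
    (t : ℝ) ^ (t - 1)

/-- `N_m(k)`: the number of trees on vertex set `{1,…,k}`, rooted at vertex `1`, whose height
(the maximum distance from the root to a vertex) is at least `m − 1`. -/
def Nm (m : ℕ) : ℕ → ℕ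
  | 0 => 0
  | (k + 1) =>
    {G : SimpleGraph (Fin (k + 1)) | G.IsTree ∧ ∃ w : Fin (k + 1), m - 1 ≤ G.dist 0 w}.ncard


/-!
Counting ordered pairs `(u, v)` instead of edges doubles `|M(t,m)|`. Deleting the edge `uv` of a
tree `T` leaves a tree on the component `S ∋ u` and a tree on `Sᶜ ∋ v`, and `uv` is `m`-centred
exactly when both have height at least `m - 1` from `u` and from `v` respectively: two paths
starting at `u` and at `v` lie in different components, so they are automatically disjoint.
Joining two such rooted trees by `uv` inverts the splitting, so for fixed `S ∋ u` and `v ∉ S`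
there are `N_m(|S|) N_m(t - |S|)` trees. Summing over `u, v, S` gives the formula, where the
terms with `k < m` or `t - k < m` vanish because a tree on `k` vertices has height below `k`.
-/

namespace SimpleGraph

variable {V W : Type*} {G F T : SimpleGraph V} {s : Set V} {a b r u v : V}

lemma Iso.dist_eq {G' : SimpleGraph W} (f : G ≃g G') (a b : V) :
    G'.dist (f a) (f b) = G.dist a b := by
  rw [dist_eq_sInf, dist_eq_sInf]
  congr 1
  ext n
  constructor
  · rintro ⟨p, rfl⟩
    exact ⟨(p.map f.symm.toHom).copy (by simp) (by simp), by simp⟩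
  · rintro ⟨p, rfl⟩
    exact ⟨p.map f.toHom, by simp⟩

lemma IsAcyclic.dist_eq_length (hG : G.IsAcyclic) {p : G.Walk a b} (hp : p.IsPath) :
    G.dist a b = p.length := by
  obtain ⟨q, hq, hql⟩ := p.reachable.exists_path_of_dist
  obtain rfl : q = p := congrArg Subtype.val ((hG.subsingleton_path a b).elim ⟨q, hq⟩ ⟨p, hp⟩)
  exact hql.symm

def AdjClosed (G : SimpleGraph V) (s : Set V) : Prop :=
  ∀ ⦃a b⦄, G.Adj a b → a ∈ s → b ∈ s

namespace AdjClosed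

lemma compl (hs : G.AdjClosed s) : G.AdjClosed sᶜ :=
  fun _ _ hab hb ha => hb (hs hab.symm ha)

lemma mem_of_reachable (hs : G.AdjClosed s) (hab : G.Reachable a b) (ha : a ∈ s) : b ∈ s := by
  obtain ⟨p⟩ := hab
  induction p with
  | nil => exact ha
  | cons h _ ih => exact ih (hs h ha)

lemma support_subset (hs : G.AdjClosed s) (p : G.Walk a b) (ha : a ∈ s) :
    ∀ x ∈ p.support, x ∈ s :=
  fun x hx => hs.mem_of_reachable (p.takeUntil x hx).reachable ha

lemma dist_induce (hs : G.AdjClosed s) (ha : a ∈ s) (hb : b ∈ s) :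
    (G.induce s).dist ⟨a, ha⟩ ⟨b, hb⟩ = G.dist a b := by
  rw [dist_eq_sInf, dist_eq_sInf]
  congr 1
  ext n
  constructor
  · rintro ⟨p, rfl⟩
    exact ⟨(p.map (Embedding.induce s).toHom : G.Walk a b), Walk.length_map _ _⟩
  · rintro ⟨p, rfl⟩
    refine ⟨p.induce s (hs.support_subset p ha), ?_⟩
    rw [← Walk.length_map (Embedding.induce s).toHom, Walk.map_induce]
    rfl

lemma isAcyclic (hs : G.AdjClosed s) (h₁ : (G.induce s).IsAcyclic)
    (h₂ : (G.induce sᶜ).IsAcyclic) : G.IsAcyclic := by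
  have key {t : Set V} (ht : G.AdjClosed t) (hacyc : (G.induce t).IsAcyclic) (a : V) (ha : a ∈ t)
      (c : G.Walk a a) : ¬ c.IsCycle := fun hc => by
    refine hacyc (c.induce t (ht.support_subset c ha)) ?_
    rwa [← Walk.isCycle_map_iff_of_injective (f := (Embedding.induce (G := G) t).toHom)
      (Embedding.induce (G := G) t).injective, Walk.map_induce]
  intro a c
  by_cases ha : a ∈ s
  exacts [key hs h₁ a ha c, key hs.compl h₂ a ha c]

lemma spanningCoe_induce_sup (hs : G.AdjClosed s) :
    (G.induce s).spanningCoe ⊔ (G.induce sᶜ).spanningCoe = G := by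
  ext a b
  simp only [sup_adj, map_adj, comap_adj, Function.Embedding.subtype_apply, Subtype.exists,
    exists_and_left, exists_prop, ↓existsAndEq, and_true, true_and, Set.mem_compl_iff]
  refine ⟨fun h => h.elim And.left And.left, fun h => ?_⟩
  by_cases ha : a ∈ s
  exacts [.inl ⟨h, ha, hs h ha⟩, .inr ⟨h, ha, hs.compl h ha⟩]

lemma reachable_iff_of_connected_induce (hs : G.AdjClosed s) (hc : (G.induce s).Connected)
    (hr : r ∈ s) (w : V) : G.Reachable r w ↔ w ∈ s :=
  ⟨fun h => hs.mem_of_reachable h hr,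
    fun hw => (hc ⟨r, hr⟩ ⟨w, hw⟩).map (Embedding.induce s).toHom⟩

end AdjClosed

lemma adjClosed_of_reachable_iff (hs : ∀ w, G.Reachable r w ↔ w ∈ s) : G.AdjClosed s :=
  fun a b hab ha => (hs b).1 (((hs a).2 ha).trans hab.reachable)

lemma connected_induce_of_reachable_iff (hs : ∀ w, G.Reachable r w ↔ w ∈ s) :
    (G.induce s).Connected := by
  obtain rfl : s = (G.connectedComponentMk r).supp := by
    ext w
    simp [← hs, ConnectedComponent.eq, reachable_comm]
  exact ConnectedComponent.connected_toSimpleGraph _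

section spanningCoe

variable {G₁ : SimpleGraph s} {G₂ : SimpleGraph ↥sᶜ}

lemma adjClosed_spanningCoe_sup : (G₁.spanningCoe ⊔ G₂.spanningCoe).AdjClosed s := by
  intro a b hab ha
  simp only [sup_adj, map_adj, Function.Embedding.subtype_apply, Subtype.exists, exists_and_right,
    exists_eq_right_right, exists_eq_right, Set.mem_compl_iff] at hab
  rcases hab with ⟨-, hb, -⟩ | ⟨ha', -, -⟩
  exacts [hb, absurd ha ha']

lemma induce_spanningCoe_sup_left : (G₁.spanningCoe ⊔ G₂.spanningCoe).induce s = G₁ := by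
  ext a b
  simp [a.2]

lemma induce_spanningCoe_sup_right : (G₁.spanningCoe ⊔ G₂.spanningCoe).induce sᶜ = G₂ := by
  ext a b
  have ha : (a : V) ∉ s := a.2
  have hb : (b : V) ∉ s := b.2
  simp [ha, hb]

end spanningCoe

lemma IsAcyclic.not_reachable_deleteEdges (hG : G.IsAcyclic) (huv : G.Adj u v) :
    ¬ (G.deleteEdges {s(u, v)}).Reachable u v :=
  isAcyclic_iff_forall_adj_isBridge.mp hG huv

lemma Connected.reachable_deleteEdges_or (hG : G.Connected) (u v w : V) :
    (G.deleteEdges {s(u, v)}).Reachable u w ∨ (G.deleteEdges {s(u, v)}).Reachable v w := by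
  set H := G.deleteEdges {s(u, v)}
  have hA : G.AdjClosed {w | H.Reachable u w ∨ H.Reachable v w} := by
    intro a b hab ha
    by_cases he : s(a, b) = s(u, v)
    · rcases Sym2.eq_iff.1 he with ⟨-, rfl⟩ | ⟨-, rfl⟩
      exacts [.inr .rfl, .inl .rfl]
    · have hH : H.Adj a b := by simp [H, hab, he]
      exact ha.imp (·.trans hH.reachable) (·.trans hH.reachable)
  exact hA.mem_of_reachable (hG u w) (.inl .rfl)

lemma IsTree.reachable_deleteEdges_iff (hT : T.IsTree) (huv : T.Adj u v) (w : V) :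
    (T.deleteEdges {s(u, v)}).Reachable v w ↔ ¬ (T.deleteEdges {s(u, v)}).Reachable u w := by
  refine ⟨fun hv hu => hT.isAcyclic.not_reachable_deleteEdges huv (hu.trans hv.symm), fun hu => ?_⟩
  exact (hT.connected.reachable_deleteEdges_or u v w).resolve_left hu

lemma deleteEdges_sup_edge_of_not_adj (h : ¬ F.Adj u v) :
    (F ⊔ edge u v).deleteEdges {s(u, v)} = F := by
  ext a b
  simp only [deleteEdges_adj, sup_adj, edge_adj, Set.mem_singleton_iff, Sym2.eq_iff]
  grind [SimpleGraph.Adj.symm]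

lemma sup_edge_deleteEdges_of_adj (h : T.Adj u v) : T.deleteEdges {s(u, v)} ⊔ edge u v = T := by
  ext a b
  simp only [deleteEdges_adj, sup_adj, edge_adj, Set.mem_singleton_iff, Sym2.eq_iff]
  grind [SimpleGraph.Adj.symm, SimpleGraph.Adj.ne]

lemma isTree_sup_edge (hF : F.IsAcyclic) (huv : ¬ F.Reachable u v)
    (hcover : ∀ w, F.Reachable u w ∨ F.Reachable v w) : (F ⊔ edge u v).IsTree := by
  have hadj : (F ⊔ edge u v).Adj u v := .inr (by simp [edge_adj]; rintro rfl; exact huv .rfl)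
  refine ⟨(connected_iff_exists_forall_reachable _).2 ⟨u, fun w => ?_⟩,
    hF.sup_edge_of_not_reachable huv⟩
  exact (hcover w).elim (·.mono le_sup_left) (hadj.reachable.trans <| ·.mono le_sup_left)

def IsTreeOfHeightGE (G : SimpleGraph V) (r : V) (h : ℕ) : Prop :=
  G.IsTree ∧ ∃ x, h ≤ G.dist r x

lemma Iso.isTreeOfHeightGE_iff {G' : SimpleGraph W} {h : ℕ} (f : G ≃g G') :
    G'.IsTreeOfHeightGE (f r) h ↔ G.IsTreeOfHeightGE r h := by
  rw [IsTreeOfHeightGE, IsTreeOfHeightGE, f.isTree_iff]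
  refine and_congr_right fun _ => ⟨fun ⟨x, hx⟩ => ⟨f.symm x, ?_⟩, fun ⟨x, hx⟩ => ⟨f x, ?_⟩⟩
  · rwa [← f.dist_eq, f.apply_symm_apply]
  · rwa [f.dist_eq]

lemma IsTreeOfHeightGE.lt_card [Fintype V] {h : ℕ} (hG : G.IsTreeOfHeightGE r h) :
    h < Fintype.card V := by
  obtain ⟨hT, x, hx⟩ := hG
  obtain ⟨p, hp, hpl⟩ := hT.connected.exists_path_of_dist r x
  exact (hpl ▸ hx).trans_lt hp.length_lt

lemma induce_isTreeOfHeightGE_iff (hG : G.IsAcyclic) (hs : ∀ w, G.Reachable r w ↔ w ∈ s)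
    (hr : r ∈ s) (h : ℕ) :
    (G.induce s).IsTreeOfHeightGE ⟨r, hr⟩ h ↔ ∃ a, G.Reachable r a ∧ h ≤ G.dist r a := by
  have hcl := adjClosed_of_reachable_iff hs
  rw [IsTreeOfHeightGE, and_iff_right ⟨connected_induce_of_reachable_iff hs, hG.induce s⟩]
  constructor
  · rintro ⟨⟨a, ha⟩, hd⟩
    exact ⟨a, (hs a).2 ha, hcl.dist_induce hr ha ▸ hd⟩
  · rintro ⟨a, hra, hd⟩
    exact ⟨⟨a, (hs a).1 hra⟩, (hcl.dist_induce hr _).symm ▸ hd⟩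

end SimpleGraph

section Centred

variable {V : Type*} {T : SimpleGraph V} {m : ℕ} {u v : V}

lemma IsCentred.symm (h : IsCentred T m u v) : IsCentred T m v u := by
  obtain ⟨huv, a, b, P, Q, hP, hQ, hPl, hQl, hdisj⟩ := h
  refine ⟨huv.symm, ?_⟩
  rw [Sym2.eq_swap]
  exact ⟨b, a, Q, P, hQ, hP, hQl, hPl, fun x hxQ hxP => hdisj x hxP hxQ⟩

lemma isCentred_iff_of_isTree (hT : T.IsTree) :
    IsCentred T m u v ↔ T.Adj u v ∧
      (∃ a, (T.deleteEdges {s(u, v)}).Reachable u a ∧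
        m - 1 ≤ (T.deleteEdges {s(u, v)}).dist u a) ∧
      ∃ b, (T.deleteEdges {s(u, v)}).Reachable v b ∧
        m - 1 ≤ (T.deleteEdges {s(u, v)}).dist v b := by
  have hH : (T.deleteEdges {s(u, v)}).IsAcyclic := hT.isAcyclic.anti (deleteEdges_le _)
  constructor
  · rintro ⟨huv, a, b, P, Q, hP, hQ, hPl, hQl, -⟩
    exact ⟨huv, ⟨a, P.reachable, hH.dist_eq_length hP ▸ hPl⟩, b, Q.reachable,
      hH.dist_eq_length hQ ▸ hQl⟩
  · rintro ⟨huv, ⟨a, ha, hda⟩, b, hb, hdb⟩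
    obtain ⟨P, hP, hPl⟩ := ha.exists_path_of_dist
    obtain ⟨Q, hQ, hQl⟩ := hb.exists_path_of_dist
    refine ⟨huv, a, b, P, Q, hP, hQ, hPl ▸ hda, hQl ▸ hdb, fun x hxP hxQ => ?_⟩
    exact hT.isAcyclic.not_reachable_deleteEdges huv
      ((P.takeUntil x hxP).reachable.trans (Q.takeUntil x hxQ).reachable.symm)

def centredGraph (T : SimpleGraph V) (m : ℕ) : SimpleGraph V where
  Adj := IsCentred T m
  symm := ⟨fun _ _ => IsCentred.symm⟩
  loopless := ⟨fun _ h => h.1.ne rfl⟩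

lemma two_mul_centredEdgeCount [Fintype V] (T : SimpleGraph V) (m : ℕ) :
    2 * centredEdgeCount T m = #{p : V × V | IsCentred T m p.1 p.2} := by
  have hedges : {e : Sym2 V | ∃ u v, e = s(u, v) ∧ IsCentred T m u v} =
      (centredGraph T m).edgeSet := by
    ext e
    induction e using Sym2.ind with | _ a b => ?_
    refine ⟨fun ⟨u, v, h, hc⟩ => ?_, fun h => ⟨a, b, rfl, h⟩⟩
    rcases Sym2.eq_iff.1 h with ⟨rfl, rfl⟩ | ⟨rfl, rfl⟩
    exacts [hc, hc.symm]
  rw [centredEdgeCount, hedges, ← coe_edgeFinset, Set.ncard_coe_finset,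
    two_mul_card_edgeFinset]
  rfl

end Centred

section Splitting

variable {V : Type*} {m : ℕ} {s : Set V} {u v : V}

lemma SimpleGraph.IsTree.isTreeOfHeightGE_induce_deleteEdges {T : SimpleGraph V}
    (hT : T.IsTree) (hC : IsCentred T m u v)
    (hs : ∀ w, (T.deleteEdges {s(u, v)}).Reachable u w ↔ w ∈ s) (hu : u ∈ s) (hv : v ∉ s) :
    ((T.deleteEdges {s(u, v)}).induce s).IsTreeOfHeightGE ⟨u, hu⟩ (m - 1) ∧
      ((T.deleteEdges {s(u, v)}).induce sᶜ).IsTreeOfHeightGE ⟨v, hv⟩ (m - 1) := by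
  obtain ⟨-, hsu, hsv⟩ := (isCentred_iff_of_isTree hT).1 hC
  have hH := hT.isAcyclic.anti (deleteEdges_le {s(u, v)})
  have hs' (w : V) : (T.deleteEdges {s(u, v)}).Reachable v w ↔ w ∈ sᶜ := by
    rw [hT.reachable_deleteEdges_iff hC.1, hs, Set.mem_compl_iff]
  exact ⟨(induce_isTreeOfHeightGE_iff hH hs hu _).2 hsu,
    (induce_isTreeOfHeightGE_iff hH hs' hv _).2 hsv⟩

lemma isTree_isCentred_sup_edge {F : SimpleGraph V} (hF : F.AdjClosed s) (hu : u ∈ s)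
    (hv : v ∉ s) (h₁ : (F.induce s).IsTreeOfHeightGE ⟨u, hu⟩ (m - 1))
    (h₂ : (F.induce sᶜ).IsTreeOfHeightGE ⟨v, hv⟩ (m - 1)) :
    (F ⊔ edge u v).IsTree ∧ IsCentred (F ⊔ edge u v) m u v ∧
      ∀ w, ((F ⊔ edge u v).deleteEdges {s(u, v)}).Reachable u w ↔ w ∈ s := by
  have hs := hF.reachable_iff_of_connected_induce h₁.1.connected hu
  have hs' := hF.compl.reachable_iff_of_connected_induce h₂.1.connected hv
  have hFacyc : F.IsAcyclic := hF.isAcyclic h₁.1.isAcyclic h₂.1.isAcyclic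
  have huv : ¬ F.Reachable u v := fun h => hv ((hs v).1 h)
  have hdel := deleteEdges_sup_edge_of_not_adj (fun h => huv h.reachable)
  have hT : (F ⊔ edge u v).IsTree := isTree_sup_edge hFacyc huv fun w => by
    by_cases hw : w ∈ s
    exacts [.inl ((hs w).2 hw), .inr ((hs' w).2 hw)]
  refine ⟨hT, ?_, by rwa [hdel]⟩
  rw [isCentred_iff_of_isTree hT, hdel]
  refine ⟨.inr ?_, (induce_isTreeOfHeightGE_iff hFacyc hs hu _).1 h₁,
    (induce_isTreeOfHeightGE_iff hFacyc hs' hv _).1 h₂⟩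
  simpa [edge_adj] using ne_of_mem_of_not_mem hu hv

end Splitting

section Counting

variable {V : Type*} [Fintype V] [DecidableEq V]

theorem card_isTree_isCentred_side_eq (m : ℕ) {u v : V} {S : Finset V} (hu : u ∈ S)
    (hv : v ∉ S) :
    #{T : SimpleGraph V | T.IsTree ∧ IsCentred T m u v ∧
        ∀ w, (T.deleteEdges {s(u, v)}).Reachable u w ↔ w ∈ S} =
      #{G₁ : SimpleGraph (S : Set V) | G₁.IsTreeOfHeightGE ⟨u, hu⟩ (m - 1)} *
        #{G₂ : SimpleGraph ↥(S : Set V)ᶜ | G₂.IsTreeOfHeightGE ⟨v, hv⟩ (m - 1)} := by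
  rw [← card_product]
  refine card_bij'
    (fun T _ => ((T.deleteEdges {s(u, v)}).induce S, (T.deleteEdges {s(u, v)}).induce (↑S)ᶜ))
    (fun p _ => p.1.spanningCoe ⊔ p.2.spanningCoe ⊔ edge u v) ?_ ?_ ?_ ?_
  · intro T hT
    simp only [mem_filter, mem_univ, true_and, mem_product] at hT ⊢
    exact hT.1.isTreeOfHeightGE_induce_deleteEdges hT.2.1 hT.2.2 hu hv
  · rintro ⟨G₁, G₂⟩ hG
    simp only [mem_filter, mem_univ, true_and, mem_product] at hG ⊢
    exact isTree_isCentred_sup_edge adjClosed_spanningCoe_sup hu hv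
      (by rw [induce_spanningCoe_sup_left]; exact hG.1)
      (by rw [induce_spanningCoe_sup_right]; exact hG.2)
  · intro T hT
    simp only [mem_filter, mem_univ, true_and] at hT
    obtain ⟨-, hC, hs⟩ := hT
    rw [(adjClosed_of_reachable_iff hs).spanningCoe_induce_sup, sup_edge_deleteEdges_of_adj hC.1]
  · rintro ⟨G₁, G₂⟩ -
    have hnadj : ¬ (G₁.spanningCoe ⊔ G₂.spanningCoe).Adj u v :=
      fun h => hv (adjClosed_spanningCoe_sup h hu)
    simp only [deleteEdges_sup_edge_of_not_adj hnadj, induce_spanningCoe_sup_left,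
      induce_spanningCoe_sup_right]

lemma card_isTreeOfHeightGE_eq_Nm (m : ℕ) (r : V) :
    #{G : SimpleGraph V | G.IsTreeOfHeightGE r (m - 1)} = Nm m (Nat.card V) := by
  have : Nonempty V := ⟨r⟩
  obtain ⟨k, hk⟩ := Nat.exists_eq_add_one_of_ne_zero (Fintype.card_ne_zero (α := V))
  let e₀ := Fintype.equivFinOfCardEq hk
  let e := e₀.trans (Equiv.swap (e₀ r) 0)
  have her : e r = 0 := Equiv.swap_apply_left _ _
  have hNm : Nm m (k + 1) =
      #{G : SimpleGraph (Fin (k + 1)) | G.IsTreeOfHeightGE (e r) (m - 1)} := by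
    rw [Nm, her, ← Set.ncard_coe_finset]
    congr 1
    ext G
    simp [IsTreeOfHeightGE]
  rw [Nat.card_eq_fintype_card, hk, hNm]
  refine card_equiv e.simpleGraph fun G => ?_
  simpa using ((Iso.comap e.symm G).symm.isTreeOfHeightGE_iff (r := r)).symm

lemma Nm_eq_zero_of_lt {m k : ℕ} (hk : k < m) : Nm m k = 0 := by
  cases k with
  | zero => rfl
  | succ k =>
    rw [← Nat.card_fin (k + 1), ← card_isTreeOfHeightGE_eq_Nm m 0, card_eq_zero,
      filter_eq_empty_iff]
    intro G _ hG
    have := hG.lt_card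
    simp only [Fintype.card_fin] at this
    omega

lemma card_isTree_isCentred_eq_sum (m : ℕ) (u v : V) :
    #{T : SimpleGraph V | T.IsTree ∧ IsCentred T m u v} =
      ∑ S : Finset V, if u ∈ S ∧ v ∉ S then Nm m #S * Nm m (Fintype.card V - #S) else 0 := by
  rw [card_eq_sum_card_fiberwise
    (f := fun T => ({w | (T.deleteEdges {s(u, v)}).Reachable u w} : Finset V))
    (t := univ) (fun _ _ => mem_univ _)]
  refine sum_congr rfl fun S _ => ?_
  rw [filter_filter]
  split_ifs with hS
  · obtain ⟨hu, hv⟩ := hS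
    have key := card_isTree_isCentred_side_eq m hu hv
    rw [card_isTreeOfHeightGE_eq_Nm, card_isTreeOfHeightGE_eq_Nm, Nat.card_coe_set_eq,
      Nat.card_coe_set_eq, Set.ncard_compl, Set.ncard_coe_finset, Nat.card_eq_fintype_card] at key
    rw [← key]
    congr 1
    ext T
    simp [and_assoc, Finset.ext_iff]
  · rw [card_eq_zero, filter_eq_empty_iff]
    rintro T - ⟨⟨hT, hC⟩, rfl⟩
    refine hS ⟨by simp, ?_⟩
    simpa using hT.isAcyclic.not_reachable_deleteEdges hC.1

lemma sum_sum_ite_mem_and_not_mem (S : Finset V) (c : ℕ) :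
    ∑ v : V, ∑ u : V, (if u ∈ S ∧ v ∉ S then c else 0) = #S * (Fintype.card V - #S) * c := by
  rw [← sum_product', sum_ite, sum_const_zero, add_zero, sum_const, smul_eq_mul]
  have hpairs : ({p ∈ univ ×ˢ univ | p.2 ∈ S ∧ p.1 ∉ S} : Finset (V × V)) = Sᶜ ×ˢ S := by
    ext
    simp [and_comm]
  rw [hpairs, card_product, card_compl]
  ring

end Counting

lemma Mcard_eq_sum_centredEdgeCount (t m : ℕ) :
    Mcard t m = ∑ T : SimpleGraph (Fin t), if T.IsTree then centredEdgeCount T m else 0 := by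
  rw [Mcard, Set.ncard_eq_toFinset_card', Set.toFinset_ofPred, card_filter,
    Fintype.sum_prod_type_right]
  refine sum_congr rfl fun T _ => ?_
  by_cases hT : T.IsTree
  · simp only [hT, true_and, if_true, ← card_filter]
    rw [centredEdgeCount, ← Set.ncard_coe_finset, coe_filter_univ]
  · simp [hT]

lemma two_mul_Mcard_eq_sum_card (t m : ℕ) :
    2 * Mcard t m = ∑ u : Fin t, ∑ v : Fin t,
      #{T : SimpleGraph (Fin t) | T.IsTree ∧ IsCentred T m u v} := by
  calc 2 * Mcard t m
      = ∑ T : SimpleGraph (Fin t),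
          if T.IsTree then #{p : Fin t × Fin t | IsCentred T m p.1 p.2} else 0 := by
        simp only [Mcard_eq_sum_centredEdgeCount, mul_sum, mul_ite, mul_zero,
          two_mul_centredEdgeCount]
    _ = ∑ T : SimpleGraph (Fin t), ∑ u, ∑ v, if T.IsTree ∧ IsCentred T m u v then 1 else 0 := by
        refine sum_congr rfl fun T _ => ?_
        by_cases hT : T.IsTree
        · simp only [hT, if_true, true_and, card_filter, Fintype.sum_prod_type]
        · simp [hT]
    _ = _ := by
        rw [sum_comm]
        simp only [card_filter]
        exact sum_congr rfl fun u _ => sum_comm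

lemma two_mul_Mcard_eq_sum_finset (t m : ℕ) :
    2 * Mcard t m = ∑ S : Finset (Fin t), #S * (t - #S) * (Nm m #S * Nm m (t - #S)) := by
  simp only [two_mul_Mcard_eq_sum_card, card_isTree_isCentred_eq_sum, Fintype.card_fin]
  rw [sum_comm]
  simp only [sum_comm (s := (univ : Finset (Fin t))) (t := (univ : Finset (Finset (Fin t)))),
    sum_sum_ite_mem_and_not_mem, Fintype.card_fin]

theorem stmt6_general (t m : ℕ) :
    2 * Mcard t m =
      ∑ k ∈ Finset.Icc m (t - m), t.choose k * k * (t - k) * Nm m k * Nm m (t - k) := by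
  rw [two_mul_Mcard_eq_sum_finset, ← powerset_univ,
    sum_powerset_apply_card fun k => k * (t - k) * (Nm m k * Nm m (t - k)), card_univ,
    Fintype.card_fin]
  have hsub : Icc m (t - m) ⊆ range (t + 1) := fun k hk => by
    simp only [mem_Icc, mem_range] at hk ⊢
    omega
  refine ((sum_subset hsub fun k hk hk' => ?_).trans (sum_congr rfl fun k _ => ?_)).symm
  · simp only [mem_Icc, mem_range, not_and_or, not_le] at hk hk'
    rcases hk' with hk' | hk'
    · simp [Nm_eq_zero_of_lt hk']
    · simp [Nm_eq_zero_of_lt (show t - k < m by omega)]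
  · simp only [smul_eq_mul]
    ring

/-- For integers `t ≥ 2m ≥ 2`,
`|M(t,m)| = (1/2) · Σ_{k=m}^{t−m} C(t,k) · k · (t−k) · N_m(k) · N_m(t−k)`. -/
theorem stmt6 (t m : ℕ) (hm : 1 ≤ m) (ht : 2 * m ≤ t) :
    2 * Mcard t m =
      ∑ k ∈ Finset.Icc m (t - m), t.choose k * k * (t - k) * Nm m k * Nm m (t - k) :=
  stmt6_general t m

end
end

section
/- For every tree T and every integer m ≥ 1, cov_{3m}(T) ≤ 3 · (the number of m-centred edges of T). -/
open SimpleGraph Finset Real Filter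
open scoped Classical

noncomputable section

/-!
A path of length `L ≥ 3m` covers `L + 1` vertices. Each of its edges with at least `m - 1`
path edges on either side is `m`-centred, the two sides of the path being the required
disjoint paths, and there are `L + 2 - 2m ≥ (L + 1) / 3` such edges. These central edges
are distinct for vertex-disjoint paths, so summing over a path system gives the bound.
-/

namespace SimpleGraph.Walk

variable {V : Type*} {G : SimpleGraph V}

theorem isCentred_of_disjoint_support {m : ℕ} {u v a b : V} (h : G.Adj u v)
    {P : G.Walk u a} {Q : G.Walk v b} (hP : P.IsPath) (hQ : Q.IsPath)
    (hPl : m - 1 ≤ P.length) (hQl : m - 1 ≤ Q.length)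
    (hdisj : ∀ x ∈ P.support, x ∉ Q.support) : IsCentred G m u v := by
  have hP_avoid : ∀ e ∈ P.edges, e ∉ ({s(u, v)} : Set (Sym2 V)) := by
    rintro e he rfl
    exact hdisj v (P.snd_mem_support_of_mem_edges he) Q.start_mem_support
  have hQ_avoid : ∀ e ∈ Q.edges, e ∉ ({s(u, v)} : Set (Sym2 V)) := by
    rintro e he rfl
    exact hdisj u P.start_mem_support (Q.fst_mem_support_of_mem_edges he)
  refine ⟨h, a, b, P.toDeleteEdges _ hP_avoid, Q.toDeleteEdges _ hQ_avoid,
    hP.toDeleteEdges _ _ _, hQ.toDeleteEdges _ _ _, ?_, ?_, ?_⟩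
  · rwa [length_transfer]
  · rwa [length_transfer]
  · simpa only [support_transfer] using hdisj

theorem IsPath.isCentred_getVert {m : ℕ} {a b : V} {W : G.Walk a b} (hW : W.IsPath)
    {i : ℕ} (him : m - 1 ≤ i) (hiW : i + 1 + (m - 1) ≤ W.length) :
    IsCentred G m (W.getVert i) (W.getVert (i + 1)) := by
  refine isCentred_of_disjoint_support (W.adj_getVert_succ (by omega))
    (hW.take i).reverse (hW.drop (i + 1)) ?_ ?_ ?_
  · simp only [length_reverse, take_length]
    omega
  · simp only [drop_length]
    omega
  · intro x hx hx'
    rw [support_reverse, List.mem_reverse, support_take] at hx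
    rw [drop_support_eq_support_drop_min] at hx'
    exact List.disjoint_take_drop hW.support_nodup (by omega) hx hx'

/-- The edges of `p` having at least `m - 1` edges of `p` on either side. -/
def centralEdges [DecidableEq V] {u v : V} (p : G.Walk u v) (m : ℕ) : Finset (Sym2 V) :=
  (Finset.Ico (m - 1) (p.length + 1 - m)).image fun i => s(p.getVert i, p.getVert (i + 1))

variable [DecidableEq V]

theorem IsPath.card_centralEdges {m : ℕ} {u v : V} {p : G.Walk u v} (hp : p.IsPath)
    (hm : 1 ≤ m) :
    (p.centralEdges m).card = p.length + 2 - 2 * m := by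
  rw [centralEdges, Finset.card_image_of_injOn, Nat.card_Ico]
  · omega
  intro i hi j hj hij
  simp only [Finset.coe_Ico, Set.mem_Ico] at hi hj
  have hinj {k l : ℕ} (hk : k ≤ p.length) (hl : l ≤ p.length)
      (h : p.getVert k = p.getVert l) : k = l :=
    hp.getVert_injOn (by simp only [Set.mem_ofPred_eq]; omega)
      (by simp only [Set.mem_ofPred_eq]; omega) h
  rcases Sym2.eq_iff.mp hij with ⟨h, -⟩ | ⟨h₁, h₂⟩
  · exact hinj (by omega) (by omega) h
  · have := hinj (by omega) (by omega) h₁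
    have := hinj (by omega) (by omega) h₂
    omega

theorem IsPath.centralEdges_subset {m : ℕ} {u v : V} {p : G.Walk u v} (hp : p.IsPath)
    (hm : 1 ≤ m) :
    ↑(p.centralEdges m) ⊆ {e : Sym2 V | ∃ x y, e = s(x, y) ∧ IsCentred G m x y} := by
  intro e he
  simp only [centralEdges, Finset.coe_image, Finset.coe_Ico, Set.mem_image, Set.mem_Ico] at he
  obtain ⟨i, ⟨hi₁, hi₂⟩, rfl⟩ := he
  exact ⟨_, _, rfl, hp.isCentred_getVert hi₁ (by omega)⟩

theorem disjoint_centralEdges {m : ℕ} {u v u' v' : V} {p : G.Walk u v} {q : G.Walk u' v'}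
    (h : ∀ x ∈ p.support, x ∉ q.support) : Disjoint (p.centralEdges m) (q.centralEdges m) := by
  simp only [centralEdges, Finset.disjoint_left, Finset.mem_image]
  rintro e ⟨i, -, rfl⟩ ⟨j, -, hj⟩
  rcases Sym2.eq_iff.mp hj with ⟨h', -⟩ | ⟨h', -⟩
  · exact h _ (by rw [h']; exact p.getVert_mem_support i) (q.getVert_mem_support j)
  · exact h _ (by rw [h']; exact p.getVert_mem_support (i + 1)) (q.getVert_mem_support j)

end SimpleGraph.Walk

open SimpleGraph.Walk

theorem coveredCard_le_sum {V : Type*} [DecidableEq V] {G : SimpleGraph V}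
    (P : Finset (Σ u : V, Σ v : V, G.Walk u v)) :
    coveredCard P ≤ ∑ p ∈ P, (p.2.2.length + 1) :=
  Finset.card_biUnion_le.trans <| Finset.sum_le_sum fun p _ =>
    (List.toFinset_card_le _).trans_eq p.2.2.length_support

theorem IsPathSystem.coveredCard_le {V : Type*} [Finite V] [DecidableEq V]
    {G : SimpleGraph V} {m : ℕ} (hm : 1 ≤ m) {P : Finset (Σ u : V, Σ v : V, G.Walk u v)}
    (hP : IsPathSystem G (3 * m) P) : coveredCard P ≤ 3 * centredEdgeCount G m := by
  obtain ⟨hpaths, hdisj⟩ := hP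
  have hcentral : (P.biUnion fun p => p.2.2.centralEdges m).card ≤ centredEdgeCount G m := by
    rw [← Set.ncard_coe_finset, centredEdgeCount]
    refine Set.ncard_le_ncard ?_ (Set.toFinite _)
    simp only [Finset.coe_biUnion, Set.iUnion_subset_iff]
    exact fun p hp => (hpaths p hp).1.centralEdges_subset hm
  rw [Finset.card_biUnion fun p hp q hq hpq => disjoint_centralEdges (hdisj p hp q hq hpq)]
    at hcentral
  calc coveredCard P ≤ ∑ p ∈ P, (p.2.2.length + 1) := coveredCard_le_sum P
    _ ≤ ∑ p ∈ P, 3 * (p.2.2.centralEdges m).card := Finset.sum_le_sum fun p hp => by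
        obtain ⟨hpath, hlen⟩ := hpaths p hp
        rw [hpath.card_centralEdges hm]
        omega
    _ ≤ 3 * centredEdgeCount G m := by
        rw [← Finset.mul_sum]
        omega

theorem stmt7_general {V : Type*} [Fintype V] [DecidableEq V] (T : SimpleGraph V)
    (m : ℕ) (hm : 1 ≤ m) :
    cov T (3 * m) ≤ 3 * centredEdgeCount T m := by
  refine csSup_le ⟨0, ∅, ⟨by simp, by simp⟩, rfl⟩ ?_
  rintro n ⟨P, hP, rfl⟩
  exact hP.coveredCard_le hm

/-- For every tree `T` and integer `m ≥ 1`,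
`cov_{3m}(T) ≤ 3 ·`(number of `m`-centred edges of `T`). -/
theorem stmt7 {V : Type*} [Fintype V] [DecidableEq V] (T : SimpleGraph V) (hT : T.IsTree)
    (m : ℕ) (hm : 1 ≤ m) :
    cov T (3 * m) ≤ 3 * centredEdgeCount T m :=
  stmt7_general T m hm
end
end

section
/- Let ℓ ≥ 1 be an integer and let G and G' be two graphs on the same vertex set whose edge sets differ in exactly one edge. Then |cov_ℓ(G) − cov_ℓ(G')| ≤ 2ℓ. -/
/-! Deleting an edge `e` from `G` cannot increase `cov_ℓ`, since every path system of `G - e` is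
one of `G`. Conversely, in an optimal path system of `G` at most one path uses `e` (the paths are
vertex-disjoint); deleting `e` splits it into two subpaths, and discarding those shorter than `ℓ`
loses at most `2ℓ` covered vertices. -/

open SimpleGraph Finset Real Filter
open scoped Classical

noncomputable section

theorem eq_sdiff_of_symmDiff_eq_of_le {α : Type*} [GeneralizedBooleanAlgebra α] {a b c : α}
    (h : symmDiff a b = c) (hc : c ≤ a) : b = a \ c := by
  rw [← symmDiff_symmDiff_cancel_left a b, h, symmDiff_of_ge hc]

theorem SimpleGraph.eq_deleteEdges_of_symmDiff_edgeSet_eq_singleton {V : Type*}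
    {G G' : SimpleGraph V} {e : Sym2 V} (h : symmDiff G.edgeSet G'.edgeSet = {e})
    (he : e ∈ G.edgeSet) : G' = G.deleteEdges {e} := by
  rw [← edgeSet_inj, edgeSet_deleteEdges]
  exact eq_sdiff_of_symmDiff_eq_of_le h (Set.singleton_subset_iff.2 he)

theorem SimpleGraph.Walk.IsTrail.exists_support_eq_append_of_mem_edges {V : Type*}
    {H : SimpleGraph V} {e : Sym2 V} :
    ∀ {a b : V} {w : H.Walk a b}, w.IsTrail → e ∈ w.edges →
      ∃ (c d : V) (w₁ : (H.deleteEdges {e}).Walk a c) (w₂ : (H.deleteEdges {e}).Walk d b),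
        w.support = w₁.support ++ w₂.support
  | _, _, .nil, _, he => by simp at he
  | u, _, .cons (v := v) hadj w, hw, he => by
    rw [isTrail_cons] at hw
    by_cases hc : s(u, v) = e
    · subst hc
      exact ⟨_, _, .nil, w.toDeleteEdge _ hw.2, by simp⟩
    · obtain ⟨c, d, w₁, w₂, hs⟩ := hw.1.exists_support_eq_append_of_mem_edges (e := e)
        ((List.mem_cons.1 he).resolve_left (Ne.symm hc))
      exact ⟨c, d, .cons (deleteEdges_adj.2 ⟨hadj, by simpa using hc⟩) w₁, w₂, by simp [hs]⟩

section PathSystem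

variable {V : Type*} {G G' : SimpleGraph V} {ℓ m : ℕ}
  {P : Finset (Σ u : V, Σ v : V, G.Walk u v)}

theorem IsPathSystem.filter_length (hP : IsPathSystem G m P) (ℓ : ℕ) :
    IsPathSystem G ℓ {p ∈ P | ℓ ≤ p.2.2.length} :=
  ⟨fun p hp => ⟨(hP.1 p (mem_filter.1 hp).1).1, (mem_filter.1 hp).2⟩,
    fun p hp q hq => hP.2 p (mem_filter.1 hp).1 q (mem_filter.1 hq).1⟩

theorem isPathSystem_singleton {a b : V} {w : G.Walk a b} (hw : w.IsPath) (hℓ : ℓ ≤ w.length) :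
    IsPathSystem G ℓ {⟨a, b, w⟩} :=
  ⟨by simpa using ⟨hw, hℓ⟩, by simp⟩

variable [DecidableEq V]

theorem IsPathSystem.pairwiseDisjoint_support (hP : IsPathSystem G ℓ P) :
    (P : Set (Σ u : V, Σ v : V, G.Walk u v)).PairwiseDisjoint
      fun p => p.2.2.support.toFinset :=
  fun p hp q hq hpq => Finset.disjoint_left.2 fun x hx hx' =>
    hP.2 p hp q hq hpq x (List.mem_toFinset.1 hx) (List.mem_toFinset.1 hx')

theorem IsPathSystem.coveredCard_eq_sum (hP : IsPathSystem G ℓ P) :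
    coveredCard P = ∑ p ∈ P, (p.2.2.length + 1) := by
  rw [coveredCard, card_biUnion hP.pairwiseDisjoint_support]
  refine sum_congr rfl fun p hp => ?_
  rw [List.toFinset_card_of_nodup (hP.1 p hp).1.support_nodup, Walk.length_support]

theorem IsPathSystem.coveredCard_le_filter_length (hP : IsPathSystem G m P) (ℓ : ℕ) :
    coveredCard P ≤ coveredCard {p ∈ P | ℓ ≤ p.2.2.length} + ℓ * #P := by
  rw [hP.coveredCard_eq_sum, (hP.filter_length ℓ).coveredCard_eq_sum, sum_filter, mul_comm,
    ← smul_eq_mul, ← sum_const, ← sum_add_distrib]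
  refine sum_le_sum fun p _ => ?_
  split_ifs <;> omega

theorem IsPathSystem.biUnion {Q : (Σ u : V, Σ v : V, G.Walk u v) →
      Finset (Σ u : V, Σ v : V, G'.Walk u v)}
    (hP : IsPathSystem G ℓ P) (hQ : ∀ p ∈ P, IsPathSystem G' m (Q p))
    (hQP : ∀ p ∈ P, ∀ q ∈ Q p, ∀ x ∈ q.2.2.support, x ∈ p.2.2.support) :
    IsPathSystem G' m (P.biUnion Q) := by
  refine ⟨fun q hq => ?_, fun q hq q' hq' hne x hx hx' => ?_⟩
  · obtain ⟨p, hp, hqp⟩ := mem_biUnion.1 hq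
    exact (hQ p hp).1 q hqp
  · obtain ⟨p, hp, hqp⟩ := mem_biUnion.1 hq
    obtain ⟨p', hp', hqp'⟩ := mem_biUnion.1 hq'
    by_cases hpp : p = p'
    · subst hpp
      exact (hQ p hp).2 q hqp q' hqp' hne x hx hx'
    · exact hP.2 p hp p' hp' hpp x (hQP p hp q hqp x hx) (hQP p' hp' q' hqp' x hx')

theorem IsPathSystem.coveredCard_biUnion {Q : (Σ u : V, Σ v : V, G.Walk u v) →
      Finset (Σ u : V, Σ v : V, G'.Walk u v)}
    (hP : IsPathSystem G ℓ P)
    (hQP : ∀ p ∈ P, ∀ q ∈ Q p, ∀ x ∈ q.2.2.support, x ∈ p.2.2.support) :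
    coveredCard (P.biUnion Q) = ∑ p ∈ P, coveredCard (Q p) := by
  rw [coveredCard, biUnion_biUnion, card_biUnion]
  · rfl
  intro p hp p' hp' hpp
  refine Finset.disjoint_left.2 fun x hx hx' => ?_
  obtain ⟨q, hq, hxq⟩ := mem_biUnion.1 hx
  obtain ⟨q', hq', hxq'⟩ := mem_biUnion.1 hx'
  exact hP.2 p hp p' hp' hpp x (hQP p hp q hq x (List.mem_toFinset.1 hxq))
    (hQP p' hp' q' hq' x (List.mem_toFinset.1 hxq'))

theorem IsPathSystem.sum_ite_mem_edges_le (hP : IsPathSystem G ℓ P) (e : Sym2 V) (k : ℕ) :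
    ∑ p ∈ P, (if e ∈ p.2.2.edges then k else 0) ≤ k := by
  induction e using Sym2.ind with
  | _ u v =>
  have hone : #{p ∈ P | s(u, v) ∈ p.2.2.edges} ≤ 1 := by
    refine card_le_one.2 fun p hp q hq => ?_
    rw [mem_filter] at hp hq
    by_contra hpq
    exact hP.2 p hp.1 q hq.1 hpq u (Walk.fst_mem_support_of_mem_edges _ hp.2)
      (Walk.fst_mem_support_of_mem_edges _ hq.2)
  rw [← sum_filter, sum_const, smul_eq_mul]
  exact (Nat.mul_le_mul_right k hone).trans_eq (one_mul k)

theorem isPathSystem_pair {a b c d : V} {w₁ : G.Walk a b} {w₂ : G.Walk c d}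
    (hw₁ : w₁.IsPath) (hw₂ : w₂.IsPath) (hdisj : ∀ x ∈ w₁.support, x ∉ w₂.support) :
    IsPathSystem G 0 {⟨a, b, w₁⟩, ⟨c, d, w₂⟩} := by
  refine ⟨by simp [hw₁, hw₂], ?_⟩
  simp only [mem_insert, mem_singleton]
  rintro p (rfl | rfl) q (rfl | rfl) hpq x hx
  exacts [absurd rfl hpq, hdisj x hx, fun hx' => hdisj x hx' hx, absurd rfl hpq]

theorem SimpleGraph.Walk.IsPath.exists_isPathSystem_deleteEdges {H : SimpleGraph V} {a b : V}
    {w : H.Walk a b} (hw : w.IsPath) (hℓ : ℓ ≤ w.length) (e : Sym2 V) :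
    ∃ Q : Finset (Σ u : V, Σ v : V, (H.deleteEdges {e}).Walk u v),
      IsPathSystem _ ℓ Q ∧ (∀ q ∈ Q, ∀ x ∈ q.2.2.support, x ∈ w.support) ∧
      w.length + 1 ≤ coveredCard Q + if e ∈ w.edges then 2 * ℓ else 0 := by
  by_cases he : e ∈ w.edges
  · obtain ⟨c, d, w₁, w₂, hs⟩ := hw.isTrail.exists_support_eq_append_of_mem_edges he
    have hnodup := hs ▸ hw.support_nodup
    rw [List.nodup_append] at hnodup
    set Q₀ : Finset (Σ u : V, Σ v : V, (H.deleteEdges {e}).Walk u v) :=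
      {⟨a, c, w₁⟩, ⟨d, b, w₂⟩}
    have hQ₀ : IsPathSystem _ 0 Q₀ := isPathSystem_pair (IsPath.mk' hnodup.1)
      (IsPath.mk' hnodup.2.1) fun x hx hx' => hnodup.2.2 x hx x hx' rfl
    refine ⟨_, hQ₀.filter_length ℓ, ?_, ?_⟩
    · simp only [Q₀, mem_filter, mem_insert, mem_singleton, hs, List.mem_append]
      rintro q ⟨rfl | rfl, -⟩ x hx <;> simp [hx]
    · rw [if_pos he]
      calc w.length + 1 = coveredCard Q₀ := by
            rw [coveredCard, biUnion_insert, singleton_biUnion, ← List.toFinset_append, ← hs,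
              List.toFinset_card_of_nodup hw.support_nodup, length_support]
        _ ≤ coveredCard {q ∈ Q₀ | ℓ ≤ q.2.2.length} + ℓ * #Q₀ :=
            hQ₀.coveredCard_le_filter_length ℓ
        _ ≤ coveredCard {q ∈ Q₀ | ℓ ≤ q.2.2.length} + 2 * ℓ := by
            rw [mul_comm 2]
            gcongr
            exact card_le_two
  · refine ⟨_, isPathSystem_singleton (w := w.toDeleteEdge e he) (hw.toDeleteEdges _ _ _)
      (by simpa using hℓ), by simp, ?_⟩
    rw [if_neg he, coveredCard, singleton_biUnion, support_transfer,
      List.toFinset_card_of_nodup hw.support_nodup, length_support]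

end PathSystem

section Cov

variable {V : Type*} [Fintype V] [DecidableEq V] {G G' : SimpleGraph V} {ℓ : ℕ}

theorem bddAbove_coveredCard (G : SimpleGraph V) (ℓ : ℕ) :
    BddAbove {n | ∃ P, IsPathSystem G ℓ P ∧ n = coveredCard P} :=
  ⟨Fintype.card V, by rintro n ⟨P, -, rfl⟩; exact card_le_univ _⟩

theorem IsPathSystem.coveredCard_le_cov {P : Finset (Σ u : V, Σ v : V, G.Walk u v)}
    (hP : IsPathSystem G ℓ P) : coveredCard P ≤ cov G ℓ :=
  le_csSup (bddAbove_coveredCard G ℓ) ⟨P, hP, rfl⟩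

theorem exists_isPathSystem_coveredCard_eq_cov (G : SimpleGraph V) (ℓ : ℕ) :
    ∃ P, IsPathSystem G ℓ P ∧ cov G ℓ = coveredCard P := by
  refine Nat.sSup_mem ?_ (bddAbove_coveredCard G ℓ)
  exact ⟨0, ∅, by simp [IsPathSystem], by simp [coveredCard]⟩

theorem cov_le_cov_add_of_refine (cost : (Σ u : V, Σ v : V, G.Walk u v) → ℕ) (c : ℕ)
    (hrefine : ∀ p : Σ u : V, Σ v : V, G.Walk u v, p.2.2.IsPath → ℓ ≤ p.2.2.length →
      ∃ Q : Finset (Σ u : V, Σ v : V, G'.Walk u v), IsPathSystem G' ℓ Q ∧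
        (∀ q ∈ Q, ∀ x ∈ q.2.2.support, x ∈ p.2.2.support) ∧
        p.2.2.length + 1 ≤ coveredCard Q + cost p)
    (hcost : ∀ P, IsPathSystem G ℓ P → ∑ p ∈ P, cost p ≤ c) :
    cov G ℓ ≤ cov G' ℓ + c := by
  obtain ⟨P, hP, hcov⟩ := exists_isPathSystem_coveredCard_eq_cov G ℓ
  choose! Q hQ hQP hQcard using fun p (hp : p ∈ P) => hrefine p (hP.1 p hp).1 (hP.1 p hp).2
  calc cov G ℓ = ∑ p ∈ P, (p.2.2.length + 1) := hcov.trans hP.coveredCard_eq_sum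
    _ ≤ ∑ p ∈ P, (coveredCard (Q p) + cost p) := sum_le_sum hQcard
    _ = coveredCard (P.biUnion Q) + ∑ p ∈ P, cost p := by
      rw [sum_add_distrib, hP.coveredCard_biUnion hQP]
    _ ≤ cov G' ℓ + c := add_le_add (hP.biUnion hQ hQP).coveredCard_le_cov (hcost P hP)

theorem cov_mono (h : G ≤ G') (ℓ : ℕ) : cov G ℓ ≤ cov G' ℓ :=
  cov_le_cov_add_of_refine (fun _ => 0) 0
    (fun ⟨a, b, w⟩ hw hℓ => ⟨_, isPathSystem_singleton (hw.mapLe h) (by simpa using hℓ),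
      by simp, by simp [coveredCard, List.toFinset_card_of_nodup hw.support_nodup]⟩)
    (by simp)

theorem cov_le_cov_deleteEdges_add (G : SimpleGraph V) (e : Sym2 V) (ℓ : ℕ) :
    cov G ℓ ≤ cov (G.deleteEdges {e}) ℓ + 2 * ℓ :=
  cov_le_cov_add_of_refine (fun p => if e ∈ p.2.2.edges then 2 * ℓ else 0) (2 * ℓ)
    (fun _ hw hℓ => hw.exists_isPathSystem_deleteEdges hℓ e)
    (fun _ hP => hP.sum_ite_mem_edges_le e _)

theorem abs_cov_sub_cov_deleteEdges_le (G : SimpleGraph V) (e : Sym2 V) (ℓ : ℕ) :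
    |(cov G ℓ : ℤ) - cov (G.deleteEdges {e}) ℓ| ≤ 2 * ℓ := by
  have h₁ := cov_mono (G.deleteEdges_le {e}) ℓ
  have h₂ := cov_le_cov_deleteEdges_add G e ℓ
  rw [abs_le]
  constructor <;> omega

end Cov

theorem stmt13_general {V : Type*} [Fintype V] [DecidableEq V] (ℓ : ℕ)
    (G G' : SimpleGraph V) (h : ∃ e : Sym2 V, symmDiff G.edgeSet G'.edgeSet = {e}) :
    |(cov G ℓ : ℤ) - (cov G' ℓ : ℤ)| ≤ 2 * ℓ := by
  obtain ⟨e, he⟩ := h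
  rcases Set.mem_symmDiff.1 (he.symm ▸ Set.mem_singleton e) with ⟨heG, -⟩ | ⟨heG', -⟩
  · rw [eq_deleteEdges_of_symmDiff_edgeSet_eq_singleton he heG]
    exact abs_cov_sub_cov_deleteEdges_le G e ℓ
  · rw [symmDiff_comm] at he
    rw [eq_deleteEdges_of_symmDiff_edgeSet_eq_singleton he heG', abs_sub_comm]
    exact abs_cov_sub_cov_deleteEdges_le G' e ℓ

/-- If `G` and `G'` are graphs on the same vertex set whose edge sets differ
in exactly one edge, then `|cov_ℓ(G) − cov_ℓ(G')| ≤ 2ℓ` for every integer `ℓ ≥ 1`. -/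
theorem stmt13 {V : Type*} [Fintype V] [DecidableEq V] (ℓ : ℕ) (hℓ : 1 ≤ ℓ)
    (G G' : SimpleGraph V) (h : ∃ e : Sym2 V, symmDiff G.edgeSet G'.edgeSet = {e}) :
    |(cov G ℓ : ℤ) - (cov G' ℓ : ℤ)| ≤ 2 * ℓ :=
  stmt13_general ℓ G G' h

end
end

section
/- Let n ≥ 1, let p ∈ (0,1), let m < t ≤ n be positive integers, and let S ⊆ {1,…,n} with |S| = t. For G ~ G(n,p), define the random variable X_S as follows: if the induced subgraph G[S] is connected and G has no edges between S and its complement, then X_S is the number of m-centred edges of G[S]; otherwise X_S = 0. Then E[X_S] ≤ |M(t,m)| · p^{t−1} · (1−p)^{t(n−t)}. -/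
open SimpleGraph Finset Real Filter
open scoped Classical

noncomputable section

/-! An `m`-centred edge `uv` of a connected graph is `m`-centred in one of its spanning trees:
the two disjoint paths glued through `uv` form a single path, and a path extends to a spanning tree.
So whenever `G[S]` is connected with no edge leaving `S`, `X_S(G)` is at most the number of pairs
`(e, T) ∈ M(t,m)` whose tree, copied onto `S`, lies in `G`. Taking expectations, each pair
contributes the probability that `G` contains the `t - 1` edges of `T` and none of the `t(n-t)`
edges leaving `S`; these are disjoint sets of independent edges, so this is
`p^(t-1) (1-p)^(t(n-t))`. -/

namespace Finset

variable {α R : Type*} [DecidableEq α] [CommSemiring R]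

theorem sum_powerset_ite_subset_disjoint {U F B : Finset α} (hF : F ⊆ U)
    (hFB : Disjoint F B) {p q : R} (hpq : p + q = 1) :
    ∑ A ∈ U.powerset, (if F ⊆ A ∧ Disjoint A B then p ^ #A * q ^ #(U \ A) else 0) =
      p ^ #F * q ^ #(U ∩ B) := by
  have hfactor : ∀ i, ((if i ∉ B then p else 0) + if i ∉ F then q else 0) =
      (if i ∈ F then p else 1) * (if i ∈ B then q else 1) := by
    intro i
    by_cases hiF : i ∈ F
    · simp [hiF, disjoint_left.mp hFB hiF]
    · by_cases hiB : i ∈ B <;> simp [hiF, hiB, hpq]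
  have hcomp : ∀ A, Disjoint (U \ A) F ↔ F ⊆ A := fun A =>
    ⟨fun h i hi => by_contra fun hiA => disjoint_left.mp h (mem_sdiff.mpr ⟨hF hi, hiA⟩) hi,
      fun h => disjoint_of_subset_right h sdiff_disjoint⟩
  calc ∑ A ∈ U.powerset, (if F ⊆ A ∧ Disjoint A B then p ^ #A * q ^ #(U \ A) else 0)
      = ∑ A ∈ U.powerset,
          (∏ i ∈ A, if i ∉ B then p else 0) * ∏ i ∈ U \ A, if i ∉ F then q else 0 := by
        refine sum_congr rfl fun A _ => ?_
        simp only [prod_ite_zero, prod_const, ← disjoint_left, hcomp]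
        by_cases hFA : F ⊆ A <;> by_cases hAB : Disjoint A B <;> simp [hFA, hAB]
    _ = ∏ i ∈ U, (if i ∈ F then p else 1) * (if i ∈ B then q else 1) := by
        rw [← prod_add]; exact prod_congr rfl fun i _ => hfactor i
    _ = p ^ #F * q ^ #(U ∩ B) := by
        rw [prod_mul_distrib, prod_ite_mem, prod_ite_mem, prod_const, prod_const,
          inter_eq_right.mpr hF]

end Finset

namespace SimpleGraph

variable {V W : Type*} {G : SimpleGraph V}

section Finite

variable [Fintype V] [DecidableEq V]

theorem image_edgeFinset_univ :
    (univ : Finset (SimpleGraph V)).image (fun G => G.edgeFinset) =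
      (⊤ : SimpleGraph V).edgeFinset.powerset := by
  ext A
  simp only [mem_image, mem_univ, true_and, mem_powerset]
  refine ⟨fun ⟨G, hG⟩ => hG ▸ edgeFinset_mono le_top, fun hA => ⟨fromEdgeSet A, ?_⟩⟩
  rw [← coe_inj, coe_edgeFinset, edgeSet_fromEdgeSet, sdiff_eq_left.mpr]
  rw [← Set.subset_compl_iff_disjoint_right, ← edgeSet_top, ← coe_edgeFinset]
  exact_mod_cast hA

theorem sum_edgeFinset {M : Type*} [AddCommMonoid M] (f : Finset (Sym2 V) → M) :
    ∑ G : SimpleGraph V, f G.edgeFinset =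
      ∑ A ∈ (⊤ : SimpleGraph V).edgeFinset.powerset, f A := by
  rw [← image_edgeFinset_univ, sum_image fun G _ H _ h => edgeFinset_inj.mp h]

end Finite

theorem Walk.IsPath.isAcyclic_fromEdgeSet {u v : V} {w : G.Walk u v} (hw : w.IsPath) :
    (fromEdgeSet {e | e ∈ w.edges}).IsAcyclic := by
  induction w with
  | nil => simp
  | @cons u c _ hadj p ih =>
    rw [cons_isPath_iff] at hw
    have hsplit : fromEdgeSet {e | e ∈ (cons hadj p).edges} =
        fromEdgeSet {e | e ∈ p.edges} ⊔ edge u c := by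
      rw [edge, ← fromEdgeSet_union]
      congr 1
      ext e
      simp
    rw [hsplit]
    refine (ih hw.1).sup_edge_of_not_reachable ?_
    -- `u` is not on `p`, so it is isolated in the graph of `p`'s edges.
    rintro ⟨_ | ⟨hux, _⟩⟩
    · exact hadj.ne rfl
    · exact hw.2 (p.fst_mem_support_of_mem_edges ((fromEdgeSet_adj _).mp hux).1)

def cutGraph (S : Finset V) : SimpleGraph V := fromRel fun u v => u ∈ S ∧ v ∉ S

theorem disjoint_cutGraph {S : Finset V} :
    Disjoint G (cutGraph S) ↔ ∀ u ∈ S, ∀ v ∉ S, ¬G.Adj u v := by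
  rw [disjoint_left]
  constructor
  · intro h u hu v hv huv
    exact h u v huv ⟨huv.ne, .inl ⟨hu, hv⟩⟩
  · rintro h x y hxy ⟨-, ⟨hx, hy⟩ | ⟨hy, hx⟩⟩
    · exact h x hx y hy hxy
    · exact h y hy x hx hxy.symm

theorem disjoint_map_cutGraph {S : Finset V} (H : SimpleGraph W) (κ : W ↪ V)
    (hκ : ∀ i, κ i ∈ S) : Disjoint (H.map κ) (cutGraph S) := by
  rw [disjoint_left]
  intro x y hxy
  obtain ⟨i, j, -, rfl, rfl⟩ := (map_adj _ _ _ _).mp hxy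
  rintro ⟨-, ⟨-, h⟩ | ⟨-, h⟩⟩
  · exact h (hκ j)
  · exact h (hκ i)

theorem card_edgeFinset_cutGraph [Fintype V] [DecidableEq V] (S : Finset V) :
    #(cutGraph S).edgeFinset = #S * #Sᶜ := by
  have hedges : (cutGraph S).edgeFinset = (S ×ˢ Sᶜ).image fun x => s(x.1, x.2) := by
    ext e
    induction e using Sym2.ind with
    | _ u v =>
      rw [mem_edgeFinset, mem_edgeSet, cutGraph, fromRel_adj]
      simp only [mem_image, mem_product, mem_compl, Prod.exists, Sym2.eq_iff]
      grind
  rw [hedges, card_image_of_injOn, card_product]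
  rintro ⟨u, v⟩ huv ⟨u', v'⟩ huv' h
  simp only [coe_product, Set.mem_prod, mem_coe, mem_compl, Sym2.eq_iff] at huv huv' h
  grind

end SimpleGraph

section ErdosRenyi

variable {n : ℕ} {p : ℝ}

theorem erWeight_eq (G : SimpleGraph (Fin n)) :
    erWeight n p G =
      p ^ #G.edgeFinset * (1 - p) ^ #((⊤ : SimpleGraph (Fin n)).edgeFinset \ G.edgeFinset) := by
  rw [erWeight, card_sdiff_of_subset (edgeFinset_mono le_top),
    card_edgeFinset_top_eq_card_choose_two, Fintype.card_fin, ← coe_edgeFinset,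
    Set.ncard_coe_finset]

theorem erProb_le_and_disjoint {H B : SimpleGraph (Fin n)} [Fintype H.edgeSet]
    [Fintype B.edgeSet] (hHB : Disjoint H B) :
    erProb n p {G | H ≤ G ∧ Disjoint G B} = p ^ #H.edgeFinset * (1 - p) ^ #B.edgeFinset := by
  rw [erProb, sum_filter]
  simp only [Set.mem_ofPred_eq, erWeight_eq, ← edgeFinset_subset_edgeFinset,
    ← disjoint_edgeFinset]
  rw [sum_edgeFinset (fun A => if H.edgeFinset ⊆ A ∧ Disjoint A B.edgeFinset then
      p ^ #A * (1 - p) ^ #((⊤ : SimpleGraph (Fin n)).edgeFinset \ A) else 0),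
    sum_powerset_ite_subset_disjoint (edgeFinset_mono le_top) (disjoint_edgeFinset.mpr hHB)
      (add_sub_cancel p 1), inter_eq_right.mpr (edgeFinset_mono le_top)]

theorem erProb_map_le_and_disjoint_cutGraph {t : ℕ} {T : SimpleGraph (Fin t)} (hT : T.IsTree)
    {S : Finset (Fin n)} (hS : #S = t) (κ : Fin t ↪ Fin n) (hκ : ∀ i, κ i ∈ S) :
    erProb n p {G | T.map κ ≤ G ∧ Disjoint G (cutGraph S)} =
      p ^ (t - 1) * (1 - p) ^ (t * (n - t)) := by
  have hTcard : #T.edgeFinset = t - 1 := by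
    have := hT.card_edgeFinset
    rw [Fintype.card_fin] at this
    omega
  have hmap : #(T.map κ).edgeFinset = #T.edgeFinset := by convert card_edgeFinset_map κ T
  rw [erProb_le_and_disjoint (disjoint_map_cutGraph T κ hκ), hmap, hTcard,
    card_edgeFinset_cutGraph, card_compl, Fintype.card_fin, hS]

theorem erWeight_nonneg (hp0 : 0 ≤ p) (hp1 : p ≤ 1) (G : SimpleGraph (Fin n)) :
    0 ≤ erWeight n p G :=
  mul_nonneg (pow_nonneg hp0 _) (pow_nonneg (sub_nonneg.mpr hp1) _)

theorem erExpect_mono (hp0 : 0 ≤ p) (hp1 : p ≤ 1) {X Y : SimpleGraph (Fin n) → ℝ}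
    (h : ∀ G, X G ≤ Y G) : erExpect n p X ≤ erExpect n p Y :=
  sum_le_sum fun G _ => mul_le_mul_of_nonneg_left (h G) (erWeight_nonneg hp0 hp1 G)

theorem erExpect_sum_indicator {ι : Type*} (s : Finset ι) (A : ι → Set (SimpleGraph (Fin n)))
    [∀ i, DecidablePred (· ∈ A i)] :
    erExpect n p (fun G => ∑ i ∈ s, if G ∈ A i then 1 else 0) =
      ∑ i ∈ s, erProb n p (A i) := by
  simp only [erExpect, erProb, mul_sum, sum_filter, mul_ite, mul_one, mul_zero]
  convert sum_comm

end ErdosRenyi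

section Centred

variable {V W : Type*} {G : SimpleGraph V}

theorem IsCentred.map {G' : SimpleGraph W} {m : ℕ} {u v : V} (f : G →g G')
    (hf : Function.Injective f) (h : IsCentred G m u v) : IsCentred G' m (f u) (f v) := by
  obtain ⟨hadj, a, b, P, Q, hP, hQ, hPlen, hQlen, hPQ⟩ := h
  let g : G.deleteEdges {s(u, v)} →g G'.deleteEdges {s(f u, f v)} :=
    ⟨f, fun {x y} hxy => by
      rw [deleteEdges_adj, Set.mem_singleton_iff] at hxy ⊢
      refine ⟨f.map_adj hxy.1, fun he => hxy.2 (Sym2.map.injective hf ?_)⟩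
      simpa only [Sym2.map_mk] using he⟩
  refine ⟨f.map_adj hadj, f a, f b, P.map g, Q.map g, hP.map hf, hQ.map hf,
    by rwa [Walk.length_map], by rwa [Walk.length_map], ?_⟩
  simp only [Walk.support_map, List.mem_map]
  rintro _ ⟨x, hx, rfl⟩ ⟨y, hy, hxy⟩
  exact hPQ x hx (hf hxy ▸ hy)

theorem IsCentred.exists_isTree_le {m : ℕ} {u v : V} (hG : G.Connected)
    (h : IsCentred G m u v) : ∃ T ≤ G, T.IsTree ∧ IsCentred T m u v := by
  obtain ⟨hadj, a, b, P, Q, hP, hQ, hPlen, hQlen, hPQ⟩ := h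
  let W : G.Walk a b :=
    (P.mapLe (deleteEdges_le _)).reverse.append (.cons hadj (Q.mapLe (deleteEdges_le _)))
  have hW : W.IsPath := by
    rw [Walk.isPath_def]
    simp only [W, Walk.support_append, Walk.support_reverse, Walk.support_cons,
      Walk.support_mapLe_eq_support, List.tail_cons]
    exact List.nodup_append.mpr ⟨List.nodup_reverse.mpr hP.support_nodup, hQ.support_nodup,
      fun x hx y hy hxy => hPQ x (List.mem_reverse.mp hx) (hxy ▸ hy)⟩
  have hWedges : ∀ e, e ∈ W.edges ↔ e ∈ P.edges ∨ e = s(u, v) ∨ e ∈ Q.edges := by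
    simp [W]
  have hHG : fromEdgeSet {e | e ∈ W.edges} ≤ G := fun x y hxy =>
    W.adj_of_mem_edges ((fromEdgeSet_adj _).mp hxy).1
  obtain ⟨T, hHT, hTG, hT⟩ :=
    hG.exists_isTree_le_of_le_of_isAcyclic hHG hW.isAcyclic_fromEdgeSet
  have hWT : ∀ e ∈ W.edges, e ∈ T.edgeSet := fun e he => edgeSet_mono hHT <| by
    rw [edgeSet_fromEdgeSet]
    exact ⟨he, G.not_isDiag_of_mem_edgeSet (W.edges_subset_edgeSet he)⟩
  have hdel : ∀ e ∈ W.edges, e ∈ (G.deleteEdges {s(u, v)}).edgeSet →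
      e ∈ (T.deleteEdges {s(u, v)}).edgeSet := by
    simp only [edgeSet_deleteEdges, Set.mem_sdiff]
    exact fun e he h => ⟨hWT e he, h.2⟩
  have hPT : ∀ e ∈ P.edges, e ∈ (T.deleteEdges {s(u, v)}).edgeSet := fun e he =>
    hdel e ((hWedges e).mpr (.inl he)) (P.edges_subset_edgeSet he)
  have hQT : ∀ e ∈ Q.edges, e ∈ (T.deleteEdges {s(u, v)}).edgeSet := fun e he =>
    hdel e ((hWedges e).mpr (.inr (.inr he))) (Q.edges_subset_edgeSet he)
  refine ⟨T, hTG, hT, hWT _ ((hWedges _).mpr (.inr (.inl rfl))), a, b, P.transfer _ hPT,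
    Q.transfer _ hQT, hP.transfer hPT, hQ.transfer hQT, by rwa [Walk.length_transfer],
    by rwa [Walk.length_transfer], ?_⟩
  simpa [Walk.support_transfer] using hPQ

theorem centredEdgeCount_le_of_injective [Finite W] {G' : SimpleGraph W} (m : ℕ) (f : G →g G')
    (hf : Function.Injective f) : centredEdgeCount G m ≤ centredEdgeCount G' m := by
  refine Set.ncard_le_ncard_of_injOn (Sym2.map f) ?_ (Sym2.map.injective hf).injOn
    (Set.toFinite _)
  rintro _ ⟨u, v, rfl, huv⟩
  exact ⟨f u, f v, Sym2.map_mk _ _ _, huv.map f hf⟩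

def centredTrees (V : Type*) [Fintype V] [DecidableEq V] (m : ℕ) :
    Finset (Sym2 V × SimpleGraph V) :=
  univ.filter fun q => q.2.IsTree ∧ ∃ u v, q.1 = s(u, v) ∧ IsCentred q.2 m u v

theorem mem_centredTrees [Fintype V] [DecidableEq V] {m : ℕ} {q : Sym2 V × SimpleGraph V} :
    q ∈ centredTrees V m ↔ q.2.IsTree ∧ ∃ u v, q.1 = s(u, v) ∧ IsCentred q.2 m u v := by
  simp [centredTrees]

theorem Mcard_eq_card_centredTrees (t m : ℕ) : Mcard t m = #(centredTrees (Fin t) m) := by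
  rw [Mcard, centredTrees, ← Set.ncard_coe_finset, coe_filter]
  simp

theorem centredEdgeCount_le_card_centredTrees [Fintype V] [DecidableEq V] (m : ℕ)
    (hG : G.Connected) : centredEdgeCount G m ≤ #{q ∈ centredTrees V m | q.2 ≤ G} := by
  rw [← Set.ncard_coe_finset]
  refine (Set.ncard_le_ncard ?_ (Set.toFinite _)).trans
    (Set.ncard_image_le (f := Prod.fst) (Set.toFinite _))
  rintro _ ⟨u, v, rfl, huv⟩
  obtain ⟨T, hTG, hT, hTuv⟩ := huv.exists_isTree_le hG
  exact ⟨(s(u, v), T), mem_filter.mpr ⟨mem_centredTrees.mpr ⟨hT, u, v, rfl, hTuv⟩, hTG⟩,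
    rfl⟩

theorem centredEdgeCount_induce_le [Fintype W] [DecidableEq W] {s : Set V} (e : W ≃ s) (m : ℕ)
    (hG : (G.induce s).Connected) :
    centredEdgeCount (G.induce s) m ≤
      #{q ∈ centredTrees W m |
        q.2.map (e.toEmbedding.trans (Function.Embedding.subtype _)) ≤ G} := by
  let φ : (G.induce s).comap e ≃g G.induce s := Iso.comap e _
  calc centredEdgeCount (G.induce s) m
      ≤ centredEdgeCount ((G.induce s).comap e) m :=
        centredEdgeCount_le_of_injective m φ.symm.toHom φ.symm.injective
    _ ≤ _ := centredEdgeCount_le_card_centredTrees m (φ.connected_iff.mpr hG)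
    _ = _ := by simp_rw [SimpleGraph.map_le_iff_le_comap]; rfl

end Centred

theorem stmt15_general (n : ℕ) (p : ℝ) (hp : p ∈ Set.Ioo (0 : ℝ) 1)
    (m t : ℕ)
    (S : Finset (Fin n)) (hS : S.card = t) :
    erExpect n p (fun G =>
        if (G.induce (S : Set (Fin n))).Connected ∧ ∀ u ∈ S, ∀ v ∉ S, ¬G.Adj u v then
          (centredEdgeCount (G.induce (S : Set (Fin n))) m : ℝ)
        else 0) ≤
      (Mcard t m : ℝ) * p ^ (t - 1) * (1 - p) ^ (t * (n - t)) := by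
  let e : Fin t ≃ (S : Set (Fin n)) := (S.orderIsoOfFin hS).toEquiv
  let κ : Fin t ↪ Fin n := e.toEmbedding.trans (Function.Embedding.subtype _)
  let A (q : Sym2 (Fin t) × SimpleGraph (Fin t)) : Set (SimpleGraph (Fin n)) :=
    {G | q.2.map κ ≤ G ∧ Disjoint G (cutGraph S)}
  calc _ ≤ erExpect n p fun G =>
          ∑ q ∈ centredTrees (Fin t) m, if G ∈ A q then 1 else 0 := by
        refine erExpect_mono hp.1.le hp.2.le fun G => ?_
        split_ifs with hG
        · rw [sum_boole, Nat.cast_le]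
          exact (centredEdgeCount_induce_le e m hG.1).trans_eq (congrArg card (filter_congr
            fun q _ => (and_iff_left (disjoint_cutGraph.mpr hG.2)).symm))
        · exact sum_nonneg fun q _ => by split_ifs <;> norm_num
    _ = ∑ q ∈ centredTrees (Fin t) m, p ^ (t - 1) * (1 - p) ^ (t * (n - t)) :=
        (erExpect_sum_indicator _ A).trans <| sum_congr rfl fun q hq =>
          erProb_map_le_and_disjoint_cutGraph (mem_centredTrees.mp hq).1 hS κ fun i => (e i).2
    _ = _ := by rw [sum_const, nsmul_eq_mul, ← Mcard_eq_card_centredTrees, mul_assoc]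

/-- Let `p ∈ (0,1)`, `1 ≤ m < t ≤ n`, and `S ⊆ {1,…,n}` with `|S| = t`.
For `G ~ G(n,p)`, let `X_S` be the number of `m`-centred edges of the induced subgraph `G[S]`
if `G[S]` is connected and `G` has no edges between `S` and its complement, and `X_S = 0`
otherwise. Then `E[X_S] ≤ |M(t,m)| · p^{t−1} · (1−p)^{t(n−t)}`. -/
theorem stmt15 (n : ℕ) (hn : 1 ≤ n) (p : ℝ) (hp : p ∈ Set.Ioo (0 : ℝ) 1)
    (m t : ℕ) (hm : 1 ≤ m) (hmt : m < t) (htn : t ≤ n)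
    (S : Finset (Fin n)) (hS : S.card = t) :
    erExpect n p (fun G =>
        if (G.induce (S : Set (Fin n))).Connected ∧ ∀ u ∈ S, ∀ v ∉ S, ¬G.Adj u v then
          (centredEdgeCount (G.induce (S : Set (Fin n))) m : ℝ)
        else 0) ≤
      (Mcard t m : ℝ) * p ^ (t - 1) * (1 - p) ^ (t * (n - t)) :=
  stmt15_general n p hp m t S hS
end
end

section
/- Let m ≥ 1 be an integer, let G be a connected graph, and let e be an m-centred edge of G. Then G has a spanning tree T containing e such that e is an m-centred edge of T. -/
open SimpleGraph Finset Real Filter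
open scoped Classical

noncomputable section

/-!
The two witness paths of an `m`-centred edge `uv`, joined through `uv`, form a single path
`a ⋯ u — v ⋯ b` of `G`. Its edges span an acyclic subgraph in which `uv` is already
`m`-centred, and extending that subgraph to a spanning tree of `G` keeps `uv` `m`-centred.
-/

namespace SimpleGraph.Walk

variable {V : Type*} {G : SimpleGraph V}

theorem IsPath.isAcyclic_fromEdgeSet_s16 {u v : V} {p : G.Walk u v} (hp : p.IsPath) :
    (fromEdgeSet {e | e ∈ p.edges}).IsAcyclic := by
  induction p with
  | nil => simp
  | @cons u w v huw q ih =>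
    rw [cons_isPath_iff] at hp
    have hedges : {e | e ∈ (cons huw q).edges} = {e | e ∈ q.edges} ∪ {s(u, w)} := by
      ext e; simp
    rw [hedges, fromEdgeSet_union]
    refine (ih hp.1).sup_edge_of_not_reachable ?_
    -- an edge of `q` at `u` would put `u` on `q`
    rintro ⟨_ | ⟨hux, _⟩⟩
    · exact huw.ne rfl
    · exact hp.2 (fst_mem_support_of_mem_edges q ((fromEdgeSet_adj _).1 hux).1)

theorem IsPath.reverse_append_cons {a u v b : V} {p : G.Walk u a} {q : G.Walk v b}
    (hp : p.IsPath) (hq : q.IsPath) (huv : G.Adj u v) (hpq : ∀ x ∈ p.support, x ∉ q.support) :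
    (p.reverse.append (cons huv q)).IsPath := by
  rw [isPath_def, support_append, support_reverse, support_cons, List.tail_cons]
  exact (List.nodup_reverse.2 hp.support_nodup).append hq.support_nodup
    fun x hx hx' => hpq x (List.mem_reverse.1 hx) hx'

end SimpleGraph.Walk

section

open SimpleGraph

variable {V : Type*} {G G' : SimpleGraph V} {m : ℕ} {u v : V}

theorem IsCentred.mono (hGG' : G ≤ G') (h : IsCentred G m u v) : IsCentred G' m u v := by
  obtain ⟨huv, a, b, P, Q, hP, hQ, hPl, hQl, hPQ⟩ := h
  have hle := deleteEdges_mono (s := {s(u, v)}) hGG'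
  refine ⟨hGG' huv, a, b, P.mapLe hle, Q.mapLe hle, hP.mapLe hle, hQ.mapLe hle, ?_, ?_, ?_⟩
  · rwa [Walk.length_mapLe]
  · rwa [Walk.length_mapLe]
  · simpa only [Walk.support_mapLe_eq_support] using hPQ

theorem IsCentred.exists_isAcyclic_le (h : IsCentred G m u v) :
    ∃ F ≤ G, F.IsAcyclic ∧ IsCentred F m u v := by
  obtain ⟨huv, a, b, P, Q, hP, hQ, hPl, hQl, hPQ⟩ := h
  have hle : G.deleteEdges {s(u, v)} ≤ G := deleteEdges_le _
  let W : G.Walk a b := (P.mapLe hle).reverse.append (.cons huv (Q.mapLe hle))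
  have hW : W.IsPath := (hP.mapLe hle).reverse_append_cons (hQ.mapLe hle) huv
    (by simpa only [Walk.support_mapLe_eq_support] using hPQ)
  let F := fromEdgeSet {e | e ∈ W.edges}
  have hWF : ∀ e ∈ W.edges, e ∈ F.edgeSet := fun e he => (edgeSet_fromEdgeSet _).symm ▸
    ⟨he, G.not_isDiag_of_mem_edgeSet (W.edges_subset_edgeSet he)⟩
  have hdel : ∀ {x y} (p : (G.deleteEdges {s(u, v)}).Walk x y),
      (∀ e ∈ p.edges, e ∈ W.edges) →
      ∀ e ∈ p.edges, e ∈ (F.deleteEdges {s(u, v)}).edgeSet := by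
    intro _ _ p hpW e he
    have := p.edges_subset_edgeSet he
    rw [edgeSet_deleteEdges] at this ⊢
    exact ⟨hWF e (hpW e he), this.2⟩
  have hPF := hdel P (by simp +contextual [W])
  have hQF := hdel Q (by simp +contextual [W])
  refine ⟨F, G.fromEdgeSet_le.2 fun e he => W.edges_subset_edgeSet he.1,
    hW.isAcyclic_fromEdgeSet_s16, hWF s(u, v) (by simp [W]), a, b, P.transfer _ hPF,
    Q.transfer _ hQF, hP.transfer _, hQ.transfer _, ?_, ?_, ?_⟩
  · rwa [Walk.length_transfer]
  · rwa [Walk.length_transfer]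
  · simpa only [Walk.support_transfer] using hPQ

end

theorem stmt16_general {V : Type*} (m : ℕ)
    (G : SimpleGraph V) (hG : G.Connected) (u v : V) (huv : IsCentred G m u v) :
    ∃ T : SimpleGraph V, T ≤ G ∧ T.IsTree ∧ T.Adj u v ∧ IsCentred T m u v := by
  obtain ⟨F, hFG, hFacyc, hcF⟩ := huv.exists_isAcyclic_le
  obtain ⟨T, hFT, hTG, hT⟩ := hG.exists_isTree_le_of_le_of_isAcyclic hFG hFacyc
  exact ⟨T, hTG, hT, (hcF.mono hFT).1, hcF.mono hFT⟩

/-- If `G` is a connected graph and `uv` is an `m`-centred edge of `G`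
(for an integer `m ≥ 1`), then `G` has a spanning tree `T` containing `uv` such that `uv`
is an `m`-centred edge of `T`. -/
theorem stmt16 {V : Type*} [Fintype V] [DecidableEq V] (m : ℕ) (hm : 1 ≤ m)
    (G : SimpleGraph V) (hG : G.Connected) (u v : V) (huv : IsCentred G m u v) :
    ∃ T : SimpleGraph V, T ≤ G ∧ T.IsTree ∧ T.Adj u v ∧ IsCentred T m u v :=
  stmt16_general m G hG u v huv

end
end

section
/- Let P be a path of length ℓ with vertex set V and edge set E, let α ≥ 1/ℓ be a real number, and let B ⊆ E with |B| ≤ α·ℓ. Let Q be the graph obtained from P by removing the edges in B. Then there exist pairwise vertex-disjoint subpaths of Q, each of length at least 1/(3α), which together cover at least (1/3 − α)·ℓ vertices of V. -/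
open SimpleGraph Finset Real Filter
open scoped Classical

noncomputable section

/-! Cutting `W` at the edges of `B` leaves at most `|B| + 1 ≤ αℓ + 1` vertex-disjoint segments,
which together contain all `ℓ + 1` vertices of `W`. Keep the segments of length at least
`r = 1/(3α)`. Each discarded segment has fewer than `r + 1` vertices, so at most
`(αℓ + 1)(r + 1) = ℓ/3 + αℓ + r + 1 ≤ (2/3 + α)ℓ + 1` vertices are lost, since `αℓ ≥ 1`
gives `r ≤ ℓ/3`. -/

namespace SimpleGraph.Walk

variable {V : Type*} [DecidableEq V] {G : SimpleGraph V} (B : Finset (Sym2 V))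

/-- The first component is the initial segment of the walk up to its first edge in `B`; the
second lists the maximal `B`-free segments after that edge. -/
def splitAtEdgesAux : ∀ {u v : V}, G.Walk u v →
    (Σ b : V, G.Walk u b) × List (Σ a : V, Σ b : V, G.Walk a b)
  | u, _, nil => (⟨u, nil⟩, [])
  | u, _, cons (v := w) h p =>
      if s(u, w) ∈ B then
        (⟨u, nil⟩, ⟨w, (splitAtEdgesAux p).1.1, (splitAtEdgesAux p).1.2⟩ :: (splitAtEdgesAux p).2)
      else
        (⟨(splitAtEdgesAux p).1.1, cons h (splitAtEdgesAux p).1.2⟩, (splitAtEdgesAux p).2)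

def splitAtEdges {u v : V} (p : G.Walk u v) : List (Σ a : V, Σ b : V, G.Walk a b) :=
  ⟨u, (p.splitAtEdgesAux B).1.1, (p.splitAtEdgesAux B).1.2⟩ :: (p.splitAtEdgesAux B).2

theorem flatten_map_support_splitAtEdges {u v : V} (p : G.Walk u v) :
    ((p.splitAtEdges B).map fun s => s.2.2.support).flatten = p.support := by
  induction p with
  | nil => simp [splitAtEdges, splitAtEdgesAux]
  | @cons u w v h p ih =>
    by_cases hb : s(u, w) ∈ B <;> simp_all [splitAtEdges, splitAtEdgesAux]

theorem flatten_map_edges_splitAtEdges {u v : V} (p : G.Walk u v) :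
    ((p.splitAtEdges B).map fun s => s.2.2.edges).flatten = p.edges.filter (· ∉ B) := by
  induction p with
  | nil => simp [splitAtEdges, splitAtEdgesAux]
  | @cons u w v h p ih =>
    by_cases hb : s(u, w) ∈ B <;> simp_all [splitAtEdges, splitAtEdgesAux]

theorem length_splitAtEdges {u v : V} (p : G.Walk u v) :
    (p.splitAtEdges B).length = (p.edges.filter (· ∈ B)).length + 1 := by
  induction p with
  | nil => simp [splitAtEdges, splitAtEdgesAux]
  | @cons u w v h p ih =>
    by_cases hb : s(u, w) ∈ B <;> simp_all [splitAtEdges, splitAtEdgesAux]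

theorem mem_edges_of_mem_splitAtEdges {u v : V} {p : G.Walk u v} {s : Σ a b : V, G.Walk a b}
    (hs : s ∈ p.splitAtEdges B) {e : Sym2 V} (he : e ∈ s.2.2.edges) : e ∈ p.edges ∧ e ∉ B := by
  have := List.mem_flatten_of_mem (List.mem_map_of_mem (f := fun s => s.2.2.edges) hs) he
  rw [flatten_map_edges_splitAtEdges, List.mem_filter, decide_eq_true_eq] at this
  exact this

theorem IsTrail.length_splitAtEdges_le {u v : V} {p : G.Walk u v} (hp : p.IsTrail) :
    (p.splitAtEdges B).length ≤ B.card + 1 := by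
  have hnodup : (p.edges.filter (· ∈ B)).Nodup := hp.edges_nodup.filter _
  rw [length_splitAtEdges, ← List.toFinset_card_of_nodup hnodup]
  gcongr
  intro e he
  simp only [List.mem_toFinset, List.mem_filter, decide_eq_true_eq] at he
  exact he.2

end SimpleGraph.Walk

theorem List.sum_map_le_sum_map_filter_add_length_mul {ι : Type*} (L : List ι) (p : ι → Bool)
    (f : ι → ℕ) {c : ℝ} (hc : 0 ≤ c) (hf : ∀ i ∈ L, p i = false → (f i : ℝ) ≤ c) :
    ((L.map f).sum : ℝ) ≤ ((L.filter p).map f).sum + L.length * c := by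
  induction L with
  | nil => simp
  | cons i L ih =>
    have ih := ih fun j hj => hf j (List.mem_cons_of_mem i hj)
    cases hp : p i
    · have := hf i List.mem_cons_self hp
      simp only [List.map_cons, List.sum_cons, List.filter_cons, hp, List.length_cons]
      push_cast at ih ⊢
      linarith
    · simp only [List.map_cons, List.sum_cons, List.filter_cons, hp, List.length_cons,
        if_true]
      push_cast at ih ⊢
      linarith

section PathSystem

variable {V : Type*} [DecidableEq V]

theorem isPathSystemR_toFinset {H : SimpleGraph V} {r : ℝ} (L : List (Σ a b : V, H.Walk a b))
    (hL : (L.map fun s => s.2.2.support).flatten.Nodup)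
    (hr : ∀ s ∈ L, r ≤ (s.2.2.length : ℝ)) :
    IsPathSystemR H r L.toFinset := by
  obtain ⟨hnodup, hdisj⟩ := List.nodup_flatten.mp hL
  have : Std.Symm fun s t : (Σ a b : V, H.Walk a b) => s.2.2.support.Disjoint t.2.2.support :=
    ⟨fun _ _ h => h.symm⟩
  refine ⟨fun s hs => ?_, fun s hs t ht hst x hxs hxt => ?_⟩
  · rw [List.mem_toFinset] at hs
    exact ⟨(SimpleGraph.Walk.isPath_def _).mpr (hnodup _ (List.mem_map_of_mem hs)), hr s hs⟩
  · rw [List.mem_toFinset] at hs ht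
    exact List.pairwise_map.mp hdisj |>.forall hs ht hst hxs hxt

theorem coveredCard_toFinset {H : SimpleGraph V} (L : List (Σ a b : V, H.Walk a b))
    (hL : (L.map fun s => s.2.2.support).flatten.Nodup) :
    coveredCard L.toFinset = (L.map fun s => s.2.2.support).flatten.length := by
  rw [coveredCard, ← List.toFinset_card_of_nodup hL]
  congr 1
  ext x
  simp

theorem exists_isPathSystemR_of_nodup_flatten {G H : SimpleGraph V} {r : ℝ}
    (L : List (Σ a b : V, G.Walk a b)) (hL : (L.map fun s => s.2.2.support).flatten.Nodup)
    (hH : ∀ s ∈ L, ∀ e ∈ s.2.2.edges, e ∈ H.edgeSet) (hr : ∀ s ∈ L, r ≤ (s.2.2.length : ℝ)) :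
    ∃ P : Finset (Σ a b : V, H.Walk a b),
      IsPathSystemR H r P ∧ coveredCard P = (L.map fun s => s.2.2.support.length).sum := by
  let L' : List (Σ a b : V, H.Walk a b) :=
    L.attach.map fun s => ⟨_, _, s.1.2.2.transfer H (hH s.1 s.2)⟩
  have hsupp : (L'.map fun s => s.2.2.support) = L.map fun s => s.2.2.support := by
    simp [L', SimpleGraph.Walk.support_transfer]
  refine ⟨L'.toFinset, isPathSystemR_toFinset L' (hsupp ▸ hL) ?_, ?_⟩
  · simp only [L', List.mem_map, List.mem_attach, true_and]
    rintro _ ⟨s, rfl⟩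
    simpa using hr s.1 s.2
  · rw [coveredCard_toFinset L' (hsupp ▸ hL), hsupp, List.length_flatten, List.map_map]
    rfl

end PathSystem

theorem SimpleGraph.Walk.IsPath.exists_isPathSystemR_length_add_one_le {V : Type*}
    [DecidableEq V] {G : SimpleGraph V} {u v : V} {p : G.Walk u v} (hp : p.IsPath)
    (B : Finset (Sym2 V)) {r : ℝ} (hr : 0 ≤ r) :
    ∃ P : Finset (Σ a b : V, (fromEdgeSet {e | e ∈ p.edges ∧ e ∉ B}).Walk a b),
      IsPathSystemR (fromEdgeSet {e | e ∈ p.edges ∧ e ∉ B}) r P ∧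
        (p.length + 1 : ℝ) ≤ coveredCard P + (B.card + 1) * (r + 1) := by
  set L := p.splitAtEdges B
  let long : (Σ a b : V, G.Walk a b) → Bool := fun s => decide (r ≤ s.2.2.length)
  have hsupp := p.flatten_map_support_splitAtEdges B
  have hnodup : (L.map fun s => s.2.2.support).flatten.Nodup := hsupp ▸ hp.support_nodup
  have hedges (s) (hs : s ∈ L.filter long) (e) (he : e ∈ s.2.2.edges) :
      e ∈ (fromEdgeSet {e | e ∈ p.edges ∧ e ∉ B}).edgeSet := by
    obtain ⟨hep, heB⟩ := mem_edges_of_mem_splitAtEdges B (List.mem_of_mem_filter hs) he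
    simp [edgeSet_fromEdgeSet, hep, heB, G.not_isDiag_of_mem_edgeSet (p.edges_subset_edgeSet hep)]
  obtain ⟨P, hP, hcov⟩ := exists_isPathSystemR_of_nodup_flatten (r := r) (L.filter long)
    (hnodup.sublist (List.filter_sublist.map _).flatten) hedges (by simp [long])
  refine ⟨P, hP, ?_⟩
  have htotal : (L.map fun s => s.2.2.support.length).sum = p.length + 1 := by
    have := congrArg List.length hsupp
    rwa [List.length_flatten, List.map_map, length_support] at this
  have hshort := L.sum_map_le_sum_map_filter_add_length_mul long (fun s => s.2.2.support.length)
    (c := r + 1) (by positivity) fun s _ hs => by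
      simp only [long, decide_eq_false_iff_not, not_le] at hs
      rw [length_support, Nat.cast_succ]
      linarith
  have hcount : (L.length : ℝ) ≤ B.card + 1 := by
    exact_mod_cast hp.isTrail.length_splitAtEdges_le B
  rw [htotal, Nat.cast_succ] at hshort
  rw [hcov]
  linarith [mul_le_mul_of_nonneg_right hcount (by positivity : 0 ≤ r + 1)]

theorem stmt18_general {V : Type*} [DecidableEq V] (G : SimpleGraph V) (u v : V) (ℓ : ℕ)
    (W : G.Walk u v) (hW : W.IsPath) (hlen : W.length = ℓ)
    (α : ℝ) (hα : 1 / (ℓ : ℝ) ≤ α)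
    (B : Finset (Sym2 V)) (hBcard : (B.card : ℝ) ≤ α * ℓ) :
    ∃ P : Finset (Σ a : V, Σ b : V,
        (SimpleGraph.fromEdgeSet {e | e ∈ W.edges ∧ e ∉ B}).Walk a b),
      IsPathSystemR (SimpleGraph.fromEdgeSet {e | e ∈ W.edges ∧ e ∉ B}) (1 / (3 * α)) P ∧
        (1 / 3 - α) * ℓ ≤ (coveredCard P : ℝ) := by
  rcases Nat.eq_zero_or_pos ℓ with rfl | hℓ
  · exact ⟨∅, ⟨by simp, by simp⟩, by simp⟩
  have hαℓ : 1 ≤ α * ℓ := by rwa [div_le_iff₀ (by positivity)] at hα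
  have hα0 : 0 < α := lt_of_lt_of_le (by positivity) hα
  set r := 1 / (3 * α)
  have hαr : α * r = 1 / 3 := by
    show α * (1 / (3 * α)) = 1 / 3
    field_simp
  have hrℓ : r ≤ ℓ / 3 := by nlinarith
  obtain ⟨P, hP, hcov⟩ := hW.exists_isPathSystemR_length_add_one_le B (r := r) (by positivity)
  refine ⟨P, hP, ?_⟩
  have hlost : (B.card + 1) * (r + 1) ≤ (2 / 3 + α) * ℓ + 1 :=
    calc (B.card + 1) * (r + 1) ≤ (α * ℓ + 1) * (r + 1) := by gcongr
      _ = (α * r) * ℓ + α * ℓ + r + 1 := by ring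
      _ ≤ (2 / 3 + α) * ℓ + 1 := by rw [hαr]; linarith
  rw [hlen] at hcov
  linarith

/-- Let `P` be a path of length `ℓ` (realized as a path `W` in a graph `G`),
let `α ≥ 1/ℓ`, and let `B` be a set of at most `α·ℓ` edges of `P`. Let `Q` be the graph obtained
from `P` by removing the edges in `B`. Then there is a collection of pairwise vertex-disjoint
paths of `Q` (automatically subpaths of `P`), each of length at least `1/(3α)`, covering at
least `(1/3 − α)·ℓ` vertices. -/
theorem stmt18 {V : Type*} [DecidableEq V] (G : SimpleGraph V) (u v : V) (ℓ : ℕ)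
    (W : G.Walk u v) (hW : W.IsPath) (hlen : W.length = ℓ)
    (α : ℝ) (hα : 1 / (ℓ : ℝ) ≤ α)
    (B : Finset (Sym2 V)) (hB : ∀ e ∈ B, e ∈ W.edges) (hBcard : (B.card : ℝ) ≤ α * ℓ) :
    ∃ P : Finset (Σ a : V, Σ b : V,
        (SimpleGraph.fromEdgeSet {e | e ∈ W.edges ∧ e ∉ B}).Walk a b),
      IsPathSystemR (SimpleGraph.fromEdgeSet {e | e ∈ W.edges ∧ e ∉ B}) (1 / (3 * α)) P ∧
        (1 / 3 - α) * ℓ ≤ (coveredCard P : ℝ) :=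
  stmt18_general G u v ℓ W hW hlen α hα B hBcard

end
end
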